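/- arXiv:2003.14201 — 7 statements merged into one kernel-verified Lean document; each statement's English description precedes it below -/
import Mathlib

section
/- Let A ⊆ Λ²W* be a linear subspace. Suppose there exist an integer s ∈ {1,2,3} and linear subspaces U ⊆ U' of W with dim U = s and dim U' = 7−s such that ω(u,u') = 0 for all ω ∈ A, all u ∈ U and all u' ∈ U' (the condition characterizing non-semistability of A). Then every form ω ∈ A has rank at most 4. -/
open Matrix

noncomputable section

abbrev W : Type := Fin 6 → ℂ
abbrev Form : Type := Matrix (Fin 6) (Fin 6) ℂ

/-- The skew-symmetric bilinear form associated to a matrix: `ω(u,v) = uᵀ M v`. -/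
def Form.apply (M : Form) (u v : W) : ℂ := u ⬝ᵥ M *ᵥ v

/-- A matrix represents a skew-symmetric (alternating) bilinear form iff `Mᵀ = -M`. -/
def Form.IsSkew (M : Form) : Prop := Mᵀ = -M

/-- Standard basis vectors of `W` (also used as the dual basis of `W*`). -/
def e (i : Fin 6) : Fin 6 → ℂ := Pi.single i 1

/-- Wedge of two covectors: `(φ∧ψ)(u,u') = φ(u)ψ(u') − ψ(u)φ(u')`. -/
def wedge (φ ψ : Fin 6 → ℂ) : Form := vecMulVec φ ψ - vecMulVec ψ φ

/-- Kernel of the linear map `u ↦ ω(u,·)`, i.e. of `u ↦ Mᵀ u`. -/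
def Form.kernel (M : Form) : Submodule ℂ W := LinearMap.ker (Matrix.mulVecLin Mᵀ)

/-- The action of `g ∈ GL(W)` on forms: `(g·ω)(u,u') = ω(gu,gu')`, as a linear map on forms. -/
def actLin (g : Matrix (Fin 6) (Fin 6) ℂ) : Form →ₗ[ℂ] Form where
  toFun M := gᵀ * M * g
  map_add' M N := by simp [add_mul, mul_add]
  map_smul' c M := by simp [mul_smul_comm, smul_mul_assoc]

/-- The geometric criterion for non-stability (Theorem 2.3(2)). -/
def Nonstable (A : Submodule ℂ Form) : Prop :=
  ∃ s : ℕ, s ∈ ({1, 2, 3} : Set ℕ) ∧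
    ∃ U U' : Submodule ℂ W, U ≤ U' ∧
      Module.finrank ℂ U = s ∧ Module.finrank ℂ U' = 6 - s ∧
      ∀ M ∈ A, ∀ u ∈ U, ∀ u' ∈ U', Form.apply M u u' = 0

/-- The geometric criterion for non-semistability (Theorem 2.3(1)). -/
def NonSemistable (A : Submodule ℂ Form) : Prop :=
  ∃ s : ℕ, s ∈ ({1, 2, 3} : Set ℕ) ∧
    ∃ U U' : Submodule ℂ W, U ≤ U' ∧
      Module.finrank ℂ U = s ∧ Module.finrank ℂ U' = 7 - s ∧
      ∀ M ∈ A, ∀ u ∈ U, ∀ u' ∈ U', Form.apply M u u' = 0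

/-- The plane `π_g` of general type. -/
def pi_g : Submodule ℂ Form :=
  Submodule.span ℂ {wedge (e 0) (e 3) + wedge (e 1) (e 4),
    wedge (e 0) (e 5) + wedge (e 2) (e 4),
    wedge (e 1) (e 5) - wedge (e 2) (e 3)}

/-! A form vanishing on `U × U'` maps `U'` into the annihilator of `U`, so its rank is at most
`codim U + codim U' = (6 - s) + (s - 1) = 5`. The rank of a skew form is even, hence at most 4:
on a complement of the radical its Gram matrix is invertible and skew, and skew matrices of odd
size are singular. -/

open Module

theorem Matrix.det_eq_zero_of_transpose_eq_neg {R n : Type*} [CommRing R] [IsDomain R]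
    (hR : ringChar R ≠ 2) [Fintype n] [DecidableEq n] {A : Matrix n n R} (hA : Aᵀ = -A)
    (hn : Odd (Fintype.card n)) : A.det = 0 := by
  have h : Aᵀ.det = -A.det := by rw [hA, det_neg, hn.neg_one_pow, neg_one_mul]
  exact (Ring.eq_self_iff_eq_zero_of_char_ne_two hR).mp (h.symm.trans (det_transpose A))

namespace LinearMap.BilinForm

variable {K V : Type*} [Field K] [AddCommGroup V] [Module K V]
  [FiniteDimensional K V] {B : LinearMap.BilinForm K V}

theorem IsAlt.even_finrank_of_nondegenerate (hK : ringChar K ≠ 2) (hB : B.IsAlt)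
    (hnd : B.Nondegenerate) : Even (finrank K V) := by
  by_contra hodd
  let b := Module.finBasis K V
  have hskew : (toMatrix b B)ᵀ = -toMatrix b B := by
    ext i j
    simp [toMatrix_apply, ← hB.neg_eq (b i) (b j)]
  exact (nondegenerate_iff_det_ne_zero b).mp hnd <|
    Matrix.det_eq_zero_of_transpose_eq_neg hK hskew (by simpa using Nat.not_even_iff_odd.mp hodd)

theorem IsAlt.even_finrank_sub_finrank_ker (hK : ringChar K ≠ 2) (hB : B.IsAlt) :
    Even (finrank K V - finrank K (LinearMap.ker B)) := by
  obtain ⟨C, hC⟩ := Submodule.exists_isCompl (LinearMap.ker B)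
  -- `B` is nondegenerate on any complement of its radical
  have hker : LinearMap.ker (B.restrict C) = ⊥ := by
    rw [ker_restrict_eq_of_codisjoint hC.symm.codisjoint
      fun x _ y hy ↦ hB.isRefl y x (by simp [LinearMap.mem_ker.mp hy])]
    exact Submodule.disjoint_iff_comap_eq_bot.mp hC.symm.disjoint
  have hC_even := IsAlt.even_finrank_of_nondegenerate hK (B := B.restrict C) (fun x ↦ hB x)
    (nondegenerate_iff_ker_eq_bot.mpr hker)
  rwa [← Submodule.finrank_add_eq_of_isCompl hC, Nat.add_sub_cancel_left]

end LinearMap.BilinForm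

theorem Matrix.even_rank_of_transpose_eq_neg {K n : Type*} [Field K] (hK : ringChar K ≠ 2)
    [Fintype n] [DecidableEq n] {M : Matrix n n K} (hM : Mᵀ = -M) : Even M.rank := by
  have halt : (toBilin' M).IsAlt := fun x ↦ by
    refine (Ring.eq_self_iff_eq_zero_of_char_ne_two hK).mp ?_
    rw [toBilin'_apply']
    conv_rhs => rw [dotProduct_mulVec, ← mulVec_transpose, hM, neg_mulVec,
      neg_dotProduct, dotProduct_comm]
  have hker : LinearMap.ker (toBilin' M) = LinearMap.ker M.mulVecLin := by
    ext x
    simp only [LinearMap.mem_ker, mulVecLin_apply]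
    constructor
    · intro h
      refine dotProduct_eq_zero _ fun y ↦ ?_
      simpa [toBilin'_apply', dotProduct_comm] using halt.isRefl x y (LinearMap.congr_fun h y)
    · intro h
      refine LinearMap.ext fun y ↦ ?_
      simpa [toBilin'_apply', h] using halt.isRefl y x
  have heven := LinearMap.BilinForm.IsAlt.even_finrank_sub_finrank_ker hK halt
  rwa [hker, ← LinearMap.finrank_range_add_finrank_ker M.mulVecLin, Nat.add_sub_cancel] at heven

theorem LinearMap.finrank_range_add_finrank_le_finrank_map_add_finrank {K V V₂ : Type*}
    [Field K] [AddCommGroup V] [Module K V] [FiniteDimensional K V] [AddCommGroup V₂]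
    [Module K V₂] (f : V →ₗ[K] V₂) (U : Submodule K V) :
    finrank K (range f) + finrank K U ≤ finrank K (U.map f) + finrank K V := by
  obtain ⟨C, hC⟩ := Submodule.exists_isCompl U
  have hrange : range f = U.map f ⊔ C.map f := by
    rw [← Submodule.map_sup, hC.sup_eq_top, Submodule.map_top]
  calc finrank K (range f) + finrank K U
      ≤ finrank K (U.map f) + finrank K (C.map f) + finrank K U := by
        rw [hrange]; gcongr; exact Submodule.finrank_add_le_finrank_add_finrank _ _
    _ ≤ finrank K (U.map f) + finrank K C + finrank K U := by
        gcongr; exact Submodule.finrank_map_le f C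
    _ = finrank K (U.map f) + finrank K V := by
        rw [← Submodule.finrank_add_eq_of_isCompl hC]; ring

theorem Matrix.rank_add_finrank_add_finrank_le {K n : Type*} [Field K] [Fintype n]
    [DecidableEq n] (M : Matrix n n K) {U U' : Submodule K (n → K)}
    (h : ∀ u ∈ U, ∀ u' ∈ U', u ⬝ᵥ M *ᵥ u' = 0) :
    M.rank + finrank K U + finrank K U' ≤ 2 * Fintype.card n := by
  let D := toBilin' (1 : Matrix n n K)
  have hD : D.Nondegenerate := LinearMap.BilinForm.nondegenerate_toBilin'_iff_det_ne_zero.mpr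
    (by simp)
  have hmap : U'.map M.mulVecLin ≤ D.orthogonal U := by
    rintro _ ⟨u', hu', rfl⟩ u hu
    simpa [D, toBilin'_apply'] using h u hu u' hu'
  have hrange := M.mulVecLin.finrank_range_add_finrank_le_finrank_map_add_finrank U'
  have himage := Submodule.finrank_mono hmap
  rw [LinearMap.BilinForm.finrank_orthogonal hD] at himage
  have hU := Submodule.finrank_le U
  simp only [finrank_fintype_fun_eq_card] at hrange himage hU
  unfold Matrix.rank
  omega

/-- an unstable (non-semistable) linear system has generic rank ≤ 4. -/
theorem statement2 (A : Submodule ℂ Form) (hA : ∀ M ∈ A, Form.IsSkew M)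
    (h : ∃ s : ℕ, s ∈ ({1, 2, 3} : Set ℕ) ∧
      ∃ U U' : Submodule ℂ W, U ≤ U' ∧
        Module.finrank ℂ U = s ∧ Module.finrank ℂ U' = 7 - s ∧
        ∀ M ∈ A, ∀ u ∈ U, ∀ u' ∈ U', Form.apply M u u' = 0) :
    ∀ M ∈ A, Matrix.rank M ≤ 4 := by
  intro M hM
  obtain ⟨s, hs, U, U', -, hU, hU', hperp⟩ := h
  have hs_le : s ≤ 3 := by simp only [Set.mem_insert_iff, Set.mem_singleton_iff] at hs; omega
  have hbound := M.rank_add_finrank_add_finrank_le (hperp M hM)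
  obtain ⟨k, hk⟩ := Matrix.even_rank_of_transpose_eq_neg (by simp [ringChar.eq_zero]) (hA M hM)
  simp only [hU, hU', Fintype.card_fin] at hbound
  omega
end
end

section
/- Let π_t ⊆ Λ²W* be the subspace spanned by e₁∧e₃ + e₂∧e₄, e₁∧e₄ + e₂∧e₅, e₁∧e₅ + e₂∧e₆. Let A ⊆ Λ²W* be a linear subspace such that every ω ∈ A has rank at most 4, and suppose A contains g·π_t for some g ∈ GL(W). Then there exists a 4-dimensional subspace U of W such that α(u,u') = 0 for all α ∈ A and all u, u' ∈ U; in particular A is not semistable. -/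
/-! Pulling A back by g we may assume π_t ⊆ A. Every form in A is degenerate, so for β ∈ A
and M ∈ π_t the pencil M + tβ is identically singular. If M has rank 4 with kernel ⟨k, k'⟩,
the lowest coefficient of det(M + tβ) is a nonzero multiple of β(k, k')², hence
β(k, k') = 0. The kernels of six members of π_t are planes in U₀ = ⟨u₃, u₄, u₅, u₆⟩ whose
Plücker vectors span Λ²U₀, so U₀ is isotropic for every β ∈ A. -/

open Matrix

noncomputable section

/-- The plane `π_t`. -/
def pi_t : Submodule ℂ Form :=
  Submodule.span ℂ {wedge (e 0) (e 2) + wedge (e 1) (e 3),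
    wedge (e 0) (e 3) + wedge (e 1) (e 4),
    wedge (e 0) (e 4) + wedge (e 1) (e 5)}

theorem Matrix.det_eq_zero_of_rank_lt {n K : Type*} [Fintype n] [DecidableEq n] [Field K]
    {M : Matrix n n K} (h : M.rank < Fintype.card n) : M.det = 0 := by
  by_contra hM
  exact h.ne (rank_of_isUnit M ((isUnit_iff_isUnit_det M).mpr (isUnit_iff_ne_zero.mpr hM)))

theorem Submodule.exists_le_finrank_eq {K V : Type*} [DivisionRing K] [AddCommGroup V]
    [Module K V] (U : Submodule K V) {k : ℕ} (hk : k ≤ Module.finrank K U) :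
    ∃ U' ≤ U, Module.finrank K U' = k := by
  obtain ⟨f, hf⟩ := exists_linearIndependent_of_le_finrank hk
  refine ⟨(span K (Set.range f)).map U.subtype, map_subtype_le _ _, ?_⟩
  rw [finrank_map_subtype_eq, finrank_span_eq_card hf, Fintype.card_fin]

theorem Form.IsSkew.apply_swap {M : Form} (hM : M.IsSkew) (i j : Fin 6) : M j i = -M i j := by
  simpa using congrFun (congrFun hM i) j

theorem Form.IsSkew.apply_self {M : Form} (hM : M.IsSkew) (i : Fin 6) : M i i = 0 := by
  have := hM.apply_swap i i
  linear_combination this / 2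

theorem Form.apply_eq_zero_of_entries {M : Form} {u v : W}
    (h : ∀ i j, u i ≠ 0 → v j ≠ 0 → M i j = 0) : M.apply u v = 0 := by
  show ∑ i, u i * ∑ j, M i j * v j = 0
  refine Finset.sum_eq_zero fun i _ => ?_
  by_cases hi : u i = 0
  · simp [hi]
  refine mul_eq_zero_of_right _ (Finset.sum_eq_zero fun j _ => ?_)
  by_cases hj : v j = 0
  · simp [hj]
  simp [h i j hi hj]

theorem actLin_apply (P M : Form) : actLin P M = Pᵀ * M * P := rfl

theorem actLin_comp (P Q : Form) : (actLin Q).comp (actLin P) = actLin (P * Q) := by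
  ext1 M
  simp [actLin_apply, transpose_mul, Matrix.mul_assoc]

theorem actLin_one : actLin 1 = LinearMap.id := by
  ext1 M
  simp [actLin_apply]

theorem Form.IsSkew.actLin {M : Form} (hM : M.IsSkew) (P : Form) : (actLin P M).IsSkew := by
  simp [Form.IsSkew, actLin_apply, transpose_mul, show Mᵀ = -M from hM, Matrix.mul_assoc]

theorem det_actLin (P M : Form) : (actLin P M).det = P.det ^ 2 * M.det := by
  simp only [actLin_apply, det_mul, det_transpose]
  ring

theorem Form.apply_actLin (P M : Form) (u v : W) :
    (actLin P M).apply u v = M.apply (P *ᵥ u) (P *ᵥ v) := by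
  simp [Form.apply, actLin_apply, ← mulVec_mulVec, dotProduct_mulVec, vecMul_transpose]

def IsIsotropic (A : Submodule ℂ Form) (U : Submodule ℂ W) : Prop :=
  ∀ α ∈ A, ∀ u ∈ U, ∀ u' ∈ U, Form.apply α u u' = 0

theorem IsIsotropic.of_map_actLin {A : Submodule ℂ Form} {U : Submodule ℂ W} {P : Form}
    (h : IsIsotropic (A.map (actLin P)) U) : IsIsotropic A (U.map P.mulVecLin) := by
  rintro α hα _ ⟨u, hu, rfl⟩ _ ⟨u', hu', rfl⟩
  simpa [Form.apply_actLin] using h _ (Submodule.mem_map_of_mem hα) u hu u' hu'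

theorem nonSemistable_of_isIsotropic {A : Submodule ℂ Form} {U : Submodule ℂ W}
    (hU : Module.finrank ℂ U = 4) (h : IsIsotropic A U) : NonSemistable A := by
  obtain ⟨U', hle, hU'⟩ := U.exists_le_finrank_eq (k := 3) (by omega)
  exact ⟨3, by simp, U', U, hle, hU', hU, fun M hM u hu u' hu' => h M hM u (hle hu) u' hu'⟩

def Form.ofInt (M : Matrix (Fin 6) (Fin 6) ℤ) : Form := M.map (Int.castRingHom ℂ)

theorem actLin_ofInt (P M : Matrix (Fin 6) (Fin 6) ℤ) :
    actLin (Form.ofInt P) (Form.ofInt M) = Form.ofInt (Pᵀ * M * P) := by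
  rw [actLin_apply, Form.ofInt, Form.ofInt, Form.ofInt, Matrix.map_mul, Matrix.map_mul,
    transpose_map]

/-- `a (e₁∧e₃ + e₂∧e₄) + b (e₁∧e₄ + e₂∧e₅) + c (e₁∧e₅ + e₂∧e₆)`, kept over `ℤ` so that
congruences between such matrices are checked by `decide`. -/
def piT (a b c : ℤ) : Matrix (Fin 6) (Fin 6) ℤ :=
  !![0, 0, a, b, c, 0; 0, 0, 0, a, b, c; -a, 0, 0, 0, 0, 0; -b, -a, 0, 0, 0, 0;
    -c, -b, 0, 0, 0, 0; 0, -c, 0, 0, 0, 0]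

theorem ofInt_piT_mem_pi_t (a b c : ℤ) : Form.ofInt (piT a b c) ∈ pi_t := by
  have h : Form.ofInt (piT a b c) =
      (a : ℂ) • (wedge (e 0) (e 2) + wedge (e 1) (e 3)) +
        (b : ℂ) • (wedge (e 0) (e 3) + wedge (e 1) (e 4)) +
          (c : ℂ) • (wedge (e 0) (e 4) + wedge (e 1) (e 5)) := by
    ext i j
    fin_cases i <;> fin_cases j <;> simp [Form.ofInt, piT, wedge, e, vecMulVec_apply]
  rw [h, pi_t]
  refine add_mem (add_mem ?_ ?_) ?_ <;>
    exact Submodule.smul_mem _ _ (Submodule.subset_span (by simp))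

/- The kernel of `J = piT 1 0 0` is spanned by `u₅, u₆` (indices 4, 5). Pulling `t` out of the
last two columns of `J + tN` leaves `C t`, which is singular for `t ≠ 0`, hence for `t = 0` by
continuity; and `C 0` is block triangular with determinant `N₄₅²`. -/
theorem entry_four_five_eq_zero_of_det_add_smul {N : Form} (hN : N.IsSkew)
    (h : ∀ t : ℂ, (Form.ofInt (piT 1 0 0) + t • N).det = 0) : N 4 5 = 0 := by
  set J := Form.ofInt (piT 1 0 0)
  let C : ℂ → Form := fun t => J + N * diagonal ![t, t, t, t, 1, 1]
  have hfactor : ∀ t, J + t • N = C t * diagonal ![1, 1, 1, 1, t, t] := by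
    intro t
    ext i j
    fin_cases i <;> fin_cases j <;> simp [C, J, Form.ofInt, piT, mul_diagonal, mul_comm]
  have hC : ∀ t ≠ 0, (C t).det = 0 := fun t ht => by
    simpa [hfactor, det_mul, det_diagonal, Fin.prod_univ_six, ht] using h t
  have hC0 : (C 0).det = 0 :=
    congrFun (Continuous.ext_on (dense_compl_singleton 0) (by fun_prop) continuous_const hC) 0
  have hblock : (C 0).submatrix finSumFinEquiv finSumFinEquiv =
      fromBlocks !![0, 0, 1, 0; 0, 0, 0, 1; -1, 0, 0, 0; 0, -1, 0, 0]
        (of fun i j => N (Fin.castAdd 2 i) (Fin.natAdd 4 j)) 0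
        !![N 4 4, N 4 5; N 5 4, N 5 5] := by
    ext (i | i) (j | j) <;> fin_cases i <;> fin_cases j <;>
      simp [C, J, Form.ofInt, piT, mul_diagonal, finSumFinEquiv]
  have hJ : det !![(0 : ℂ), 0, 1, 0; 0, 0, 0, 1; -1, 0, 0, 0; 0, -1, 0, 0] = 1 := by
    simp [det_succ_row_zero, Fin.sum_univ_succ, Fin.succAbove]
  have hdet0 : (C 0).det = N 4 5 ^ 2 := by
    have h := det_submatrix_equiv_self (finSumFinEquiv (m := 4) (n := 2)) (C 0)
    rw [hblock, det_fromBlocks_zero₂₁, det_fin_two_of, hJ, hN.apply_self 4, hN.apply_self 5,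
      hN.apply_swap 4 5] at h
    exact h.symm.trans (by ring)
  exact pow_eq_zero_iff (n := 2) (by norm_num) |>.mp (hdet0 ▸ hC0)

theorem actLin_entry_four_five_eq_zero_of_congr {β : Form} (hβ : β.IsSkew) {a b c : ℤ}
    (h : ∀ t : ℂ, (Form.ofInt (piT a b c) + t • β).det = 0) (P : Matrix (Fin 6) (Fin 6) ℤ)
    (hP : Pᵀ * piT a b c * P = piT 1 0 0) : actLin (Form.ofInt P) β 4 5 = 0 :=
  entry_four_five_eq_zero_of_det_add_smul (hβ.actLin _) fun t => by
    rw [← hP, ← actLin_ofInt, ← map_smul, ← map_add, det_actLin, h, mul_zero]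

/- Columns 4 and 5 of each `P` below span the kernel of the pencil member it normalizes; the six
kernel planes have independent Plücker coordinates, which gives the six entries `β i j`,
`2 ≤ i < j`. -/
theorem entry_eq_zero_of_det_piT_add_smul {β : Form} (hβ : β.IsSkew)
    (h : ∀ a b c : ℤ, ∀ t : ℂ, (Form.ofInt (piT a b c) + t • β).det = 0)
    {i j : Fin 6} (hi : 2 ≤ i) (hj : 2 ≤ j) : β i j = 0 := by
  have key := fun a b c => actLin_entry_four_five_eq_zero_of_congr hβ (h a b c)
  have h45 : β 4 5 = 0 := by
    simpa [Form.ofInt, actLin_apply] using key 1 0 0 1 (by decide)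
  have h23 : β 2 3 = 0 := by
    simpa [Form.ofInt, actLin_apply, mul_apply, Fin.sum_univ_six] using key 0 0 1
      !![1, 0, 0, 0, 0, 0; 0, 1, 0, 0, 0, 0; 0, 0, 0, 0, 1, 0;
        0, 0, 0, 0, 0, 1; 0, 0, 1, 0, 0, 0; 0, 0, 0, 1, 0, 0] (by decide)
  have h25 : β 2 5 = 0 := by
    simpa [Form.ofInt, actLin_apply, mul_apply, Fin.sum_univ_six] using key 0 1 0
      !![1, 0, 0, 0, 0, 0; 0, 1, 0, 0, 0, 0; 0, 0, 0, 0, 1, 0;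
        0, 0, 1, 0, 0, 0; 0, 0, 0, 1, 0, 0; 0, 0, 0, 0, 0, 1] (by decide)
  have h35 : β 3 5 = 0 := by
    simpa [Form.ofInt, actLin_apply, mul_apply, Fin.sum_univ_six, h25, h45] using key 1 1 0
      !![1, 0, 0, 0, 0, 0; 0, 1, 0, 0, 0, 0; 0, 0, 1, 0, 1, 0;
        0, 0, 0, 0, -1, 0; 0, 0, 0, 1, 1, 0; 0, 0, 0, 0, 0, 1] (by decide)
  have h24 : β 2 4 = 0 := by
    simpa [Form.ofInt, actLin_apply, mul_apply, Fin.sum_univ_six, h23, h25] using key 0 1 1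
      !![1, 0, 0, 0, 0, 0; 0, 1, 0, 0, 0, 0; 0, 0, 0, 0, 1, 0;
        0, 0, 1, 0, 0, 1; 0, 0, 0, 0, 0, -1; 0, 0, 0, 1, 0, 1] (by decide)
  have h34 : β 3 4 = 0 := by
    simpa [Form.ofInt, actLin_apply, mul_apply, Fin.sum_univ_six, h23, h25, h45,
      hβ.apply_swap 3 4] using key 1 0 1
      !![1, 0, 0, 0, 0, 0; 0, 1, 0, 0, 0, 0; 0, 0, 1, 0, 1, 0;
        0, 0, 0, 1, 0, 1; 0, 0, 0, 0, -1, 0; 0, 0, 0, 0, 0, -1] (by decide)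
  have upper : ∀ i j : Fin 6, 2 ≤ i → i < j → β i j = 0 := by
    intro i j hi hij
    fin_cases i <;> fin_cases j <;> simp_all
  rcases lt_trichotomy i j with hij | rfl | hij
  · exact upper i j hi hij
  · exact hβ.apply_self i
  · rw [hβ.apply_swap j i, upper j i hj hij, neg_zero]

/-- `U₀ = ⟨u₃, u₄, u₅, u₆⟩`. -/
def U₀ : Submodule ℂ W := LinearMap.ker (LinearMap.funLeft ℂ ℂ (Fin.castAdd 4 : Fin 2 → Fin 6))

theorem finrank_U₀ : Module.finrank ℂ U₀ = 4 := by
  have h := LinearMap.finrank_range_add_finrank_ker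
    (LinearMap.funLeft ℂ ℂ (Fin.castAdd 4 : Fin 2 → Fin 6))
  rw [LinearMap.range_eq_top.mpr (LinearMap.funLeft_surjective_of_injective _ _ _
    (Fin.castAdd_injective 2 4)), finrank_top] at h
  simp only [Module.finrank_fin_fun] at h
  exact Nat.add_left_cancel h

theorem two_le_of_mem_U₀ {u : W} (hu : u ∈ U₀) {i : Fin 6} (hi : u i ≠ 0) : 2 ≤ i := by
  by_contra hlt
  exact hi (congrFun (LinearMap.mem_ker.mp hu) ⟨i, by omega⟩)

theorem isIsotropic_U₀ {B : Submodule ℂ Form} (hskew : ∀ M ∈ B, M.IsSkew)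
    (hdet : ∀ M ∈ B, M.det = 0) (hB : pi_t ≤ B) : IsIsotropic B U₀ := by
  intro β hβ u hu u' hu'
  have hpencil : ∀ a b c : ℤ, ∀ t : ℂ, (Form.ofInt (piT a b c) + t • β).det = 0 :=
    fun a b c t => hdet _ (B.add_mem (hB (ofInt_piT_mem_pi_t a b c)) (B.smul_mem t hβ))
  exact Form.apply_eq_zero_of_entries fun i j hi hj =>
    entry_eq_zero_of_det_piT_add_smul (hskew β hβ) hpencil
      (two_le_of_mem_U₀ hu hi) (two_le_of_mem_U₀ hu' hj)

/-- a linear system of generic rank ≤ 4 containing a translate of `π_t`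
admits a 4-dimensional isotropic subspace; in particular it is not semistable. -/
theorem statement5 (A : Submodule ℂ Form) (hA : ∀ M ∈ A, Form.IsSkew M)
    (hrk : ∀ M ∈ A, Matrix.rank M ≤ 4)
    (g : GL (Fin 6) ℂ)
    (hg : Submodule.map (actLin (g : Matrix (Fin 6) (Fin 6) ℂ)) pi_t ≤ A) :
    (∃ U : Submodule ℂ W, Module.finrank ℂ U = 4 ∧
      ∀ α ∈ A, ∀ u ∈ U, ∀ u' ∈ U, Form.apply α u u' = 0) ∧ NonSemistable A := by
  set P : Form := ↑g⁻¹
  have hdet : ∀ M ∈ A, M.det = 0 := fun M hM =>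
    det_eq_zero_of_rank_lt ((hrk M hM).trans_lt (by simp))
  have hB : pi_t ≤ A.map (actLin P) := calc
    pi_t = (pi_t.map (actLin ↑g)).map (actLin P) := by
      rw [← Submodule.map_comp, actLin_comp, Units.mul_inv, actLin_one, Submodule.map_id]
    _ ≤ A.map (actLin P) := Submodule.map_mono hg
  have hiso : IsIsotropic A (U₀.map P.mulVecLin) := IsIsotropic.of_map_actLin <|
    isIsotropic_U₀ (by rintro _ ⟨α, hα, rfl⟩; exact (hA α hα).actLin P)
      (by rintro _ ⟨α, hα, rfl⟩; rw [det_actLin, hdet α hα, mul_zero]) hB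
  have hU : Module.finrank ℂ (U₀.map P.mulVecLin) = 4 := by
    rw [← finrank_U₀]
    exact (Submodule.equivMapOfInjective _ (mulVec_injective_iff_isUnit.mpr g⁻¹.isUnit)
      U₀).finrank_eq.symm
  exact ⟨⟨_, hU, hiso⟩, nonSemistable_of_isIsotropic hU hiso⟩
end
end

section
/- Let π₅ ⊆ Λ²W* be the subspace spanned by e₁∧e₄ + e₂∧e₃, e₁∧e₅ + e₂∧e₄, e₂∧e₅ + e₃∧e₄. Let A ⊆ Λ²W* be a linear subspace such that every ω ∈ A has rank at most 4, and suppose A contains g·π₅ for some g ∈ GL(W). Then there exists a nonzero vector u ∈ W such that u ∈ ker(α) for every α ∈ A; in particular A is not semistable. -/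
open Matrix

noncomputable section

/-- The plane `π₅`. -/
def pi_5 : Submodule ℂ Form :=
  Submodule.span ℂ {wedge (e 0) (e 3) + wedge (e 1) (e 2),
    wedge (e 0) (e 4) + wedge (e 1) (e 3),
    wedge (e 1) (e 4) + wedge (e 2) (e 3)}

/-!
Every member of `π₅` vanishes on `u₆`, and a nonzero `ω ∈ π₅` has rank `4`. If every form of the
pencil `ω + t α` has rank at most `4 = rk ω`, then `α(a, b) = 0` for `a, b ∈ ker ω`: a nonzero
`4`-minor of `ω` bordered by `a` and `b` gives a `5`-minor of `ω + t α` whose determinant,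
after rescaling, is continuous in `t`, vanishes for `t ≠ 0`, and equals the minor times
`α(a, b)` at `t = 0`. After moving `π₅` back to standard position by `g⁻¹`, the kernels of
five members of `π₅` together with `u₆` span `W`, so `u₆` lies in the kernel of every `α ∈ A`.
-/

namespace Matrix

variable {𝕜 m n : Type*}

theorem det_eq_zero_of_rank_lt_s7 [Field 𝕜] [Fintype n] [DecidableEq n] (A : Matrix n n 𝕜)
    (h : A.rank < Fintype.card n) : A.det = 0 := by
  by_contra hA
  exact h.ne (A.rank_of_isUnit ((isUnit_iff_isUnit_det A).mpr (Ne.isUnit hA)))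

variable [NontriviallyNormedField 𝕜]

theorem det_eq_zero_of_forall_ne_zero_det_add_smul_eq_zero [Fintype n] [DecidableEq n]
    (A B : Matrix n n 𝕜) (h : ∀ t : 𝕜, t ≠ 0 → (A + t • B).det = 0) : A.det = 0 := by
  have hcont : Continuous fun t : 𝕜 => (A + t • B).det := by fun_prop
  have hzero := (dense_compl_singleton (0 : 𝕜)).closure_eq ▸
    (isClosed_eq hcont continuous_const).closure_subset_iff.mpr h
  simpa using hzero (Set.mem_univ 0)

theorem dotProduct_mulVec_eq_zero_of_rank_add_smul_le [Fintype m] [Fintype n] [DecidableEq m]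
    [DecidableEq n] {r : ℕ} (O M : Matrix m n 𝕜) (I : Fin r → m) (J : Fin r → n)
    (hIJ : (O.submatrix I J).det ≠ 0) {a : m → 𝕜} {b : n → 𝕜} (ha : a ᵥ* O = 0)
    (hb : O *ᵥ b = 0) (hrk : ∀ t : 𝕜, (O + t • M).rank ≤ r) : a ⬝ᵥ M *ᵥ b = 0 := by
  set P : Matrix (Fin r) m 𝕜 := (1 : Matrix m m 𝕜).submatrix I (Equiv.refl m)
  set Q : Matrix n (Fin r) 𝕜 := (1 : Matrix n n 𝕜).submatrix (Equiv.refl n) J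
  have hPOQ : P * O * Q = O.submatrix I J := by
    simp only [P, Q, one_submatrix_mul, mul_submatrix_one]
    rfl
  -- Border the nonzero minor by the row `t⁻¹ • a` and the column `b`: for `t ≠ 0` this
  -- `(r+1)`-minor of `O + t • M` is `A + t • B`, which tends to `A`, and `det A` is the minor
  -- times `a ⬝ᵥ M *ᵥ b`.
  set A := fromBlocks (P * O * Q) 0 (replicateRow Unit (a ᵥ* M) * Q)
    (replicateRow Unit (a ᵥ* M) * replicateCol Unit b)
  set B := fromBlocks (P * M * Q) (P * M * replicateCol Unit b) 0 0
  have hdetA : A.det = (O.submatrix I J).det * (a ⬝ᵥ M *ᵥ b) := by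
    simp [A, hPOQ, det_fromBlocks_zero₁₂, replicateRow_mul_replicateCol_apply, dotProduct_mulVec]
  have hbordered : ∀ t : 𝕜, t ≠ 0 → fromRows P (replicateRow Unit (t⁻¹ • a)) * (O + t • M) *
      fromCols Q (replicateCol Unit b) = A + t • B := by
    intro t ht
    have hrow : replicateRow Unit (t⁻¹ • a) * (O + t • M) = replicateRow Unit (a ᵥ* M) := by
      rw [← replicateRow_vecMul]
      congr 1
      simp [vecMul_add, vecMul_smul, smul_vecMul, ha, ht]
    have hcol : (O + t • M) * replicateCol Unit b = t • (M * replicateCol Unit b) := by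
      rw [← replicateCol_mulVec, ← replicateCol_mulVec, ← replicateCol_smul]
      congr 1
      simp [add_mulVec, smul_mulVec, hb]
    rw [fromRows_mul, fromRows_mul_fromCols, hrow, Matrix.mul_assoc P _ (replicateCol _ _), hcol]
    simp [A, B, fromBlocks_smul, fromBlocks_add, Matrix.mul_add, Matrix.add_mul, Matrix.mul_assoc]
  have hdet : ∀ t : 𝕜, t ≠ 0 → (A + t • B).det = 0 := by
    intro t ht
    rw [← hbordered t ht]
    apply det_eq_zero_of_rank_lt_s7
    calc _ ≤ (O + t • M).rank := (rank_mul_le_left _ _).trans (rank_mul_le_right _ _)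
      _ ≤ r := hrk t
      _ < _ := by simp
  have hA := det_eq_zero_of_forall_ne_zero_det_add_smul_eq_zero A B hdet
  rw [hdetA] at hA
  exact (mul_eq_zero.mp hA).resolve_left hIJ

end Matrix

theorem vecMul_wedge (v φ ψ : W) : v ᵥ* wedge φ ψ = (v ⬝ᵥ φ) • ψ - (v ⬝ᵥ ψ) • φ := by
  simp [wedge, vecMul_sub, vecMul_vecMulVec]

theorem wedge_mulVec (φ ψ v : W) : wedge φ ψ *ᵥ v = (ψ ⬝ᵥ v) • φ - (φ ⬝ᵥ v) • ψ := by
  simp [wedge, sub_mulVec, vecMulVec_mulVec]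

theorem Form.mem_kernel_iff {M : Form} {u : W} : u ∈ M.kernel ↔ u ᵥ* M = 0 := by
  simp [Form.kernel]

theorem actLin_apply_s7 (g M : Matrix (Fin 6) (Fin 6) ℂ) : actLin g M = gᵀ * M * g := rfl

theorem actLin_mul (g h M : Matrix (Fin 6) (Fin 6) ℂ) :
    actLin (g * h) M = actLin h (actLin g M) := by
  simp [actLin_apply_s7, transpose_mul, Matrix.mul_assoc]

theorem actLin_one_s7 (M : Matrix (Fin 6) (Fin 6) ℂ) : actLin 1 M = M := by
  simp [actLin_apply_s7]

theorem rank_actLin_le (g M : Matrix (Fin 6) (Fin 6) ℂ) : (actLin g M).rank ≤ M.rank :=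
  (rank_mul_le_left _ _).trans (rank_mul_le_right _ _)

theorem Form.mem_kernel_actLin_iff (g : GL (Fin 6) ℂ) (M : Form) (u : W) :
    u ∈ (actLin g M).kernel ↔ (g : Matrix (Fin 6) (Fin 6) ℂ) *ᵥ u ∈ M.kernel := by
  rw [Form.mem_kernel_iff, Form.mem_kernel_iff, actLin_apply_s7, ← vecMul_vecMul, ← vecMul_vecMul,
    vecMul_transpose]
  constructor
  · exact fun h => vecMul_injective_iff_isUnit.mpr g.isUnit (by simpa using h)
  · intro h
    simp [h]

theorem nonSemistable_of_mem_kernel {A : Submodule ℂ Form} {u : W} (hu : u ≠ 0)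
    (hker : ∀ α ∈ A, u ∈ α.kernel) : NonSemistable A := by
  refine ⟨1, by simp, ℂ ∙ u, ⊤, le_top, finrank_span_singleton hu, by simp, ?_⟩
  intro α hα x hx y _
  obtain ⟨c, rfl⟩ := Submodule.mem_span_singleton.mp hx
  simp [Form.apply, dotProduct_mulVec, smul_vecMul, Form.mem_kernel_iff.mp (hker α hα)]

theorem vecMul_e_five_eq_zero_of_mem_pi_5 {O : Form} (hO : O ∈ pi_5) : e 5 ᵥ* O = 0 := by
  induction hO using Submodule.span_induction with
  | mem x hx =>
    rcases hx with rfl | rfl | rfl <;> simp only [vecMul_add, vecMul_wedge] <;> simp [e]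
  | zero => simp
  | add x y _ _ hx hy => simp [vecMul_add, hx, hy]
  | smul c x _ hx => simp [vecMul_smul, hx]

def ω₁ : Form := wedge (e 0) (e 3) + wedge (e 1) (e 2)
def ω₂ : Form := wedge (e 0) (e 4) + wedge (e 1) (e 3)
def ω₃ : Form := wedge (e 1) (e 4) + wedge (e 2) (e 3)

theorem ω₁_mem_pi_5 : ω₁ ∈ pi_5 := Submodule.subset_span (by simp [ω₁])
theorem ω₂_mem_pi_5 : ω₂ ∈ pi_5 := Submodule.subset_span (by simp [ω₂])
theorem ω₃_mem_pi_5 : ω₃ ∈ pi_5 := Submodule.subset_span (by simp [ω₃])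

theorem det_submatrix_ω₁_ne_zero : (ω₁.submatrix ![0, 1, 2, 3] ![3, 2, 1, 0]).det ≠ 0 := by
  simp only [det_succ_row_zero, Fin.sum_univ_succ, submatrix_apply]
  simp [ω₁, wedge, e, vecMulVec_apply, Pi.single_apply, Fin.succAbove]

theorem det_submatrix_ω₂_ne_zero : (ω₂.submatrix ![0, 1, 3, 4] ![4, 3, 1, 0]).det ≠ 0 := by
  simp only [det_succ_row_zero, Fin.sum_univ_succ, submatrix_apply]
  simp [ω₂, wedge, e, vecMulVec_apply, Pi.single_apply, Fin.succAbove]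

theorem det_submatrix_ω₃_ne_zero : (ω₃.submatrix ![1, 2, 3, 4] ![4, 3, 2, 1]).det ≠ 0 := by
  simp only [det_succ_row_zero, Fin.sum_univ_succ, submatrix_apply]
  simp [ω₃, wedge, e, vecMulVec_apply, Pi.single_apply, Fin.succAbove]

theorem det_submatrix_ω₁_add_ω₂_ne_zero :
    ((ω₁ + ω₂).submatrix ![0, 1, 2, 3] ![3, 2, 1, 0]).det ≠ 0 := by
  simp only [det_succ_row_zero, Fin.sum_univ_succ, submatrix_apply]
  simp [ω₁, ω₂, wedge, e, vecMulVec_apply, Pi.single_apply, Fin.succAbove]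

theorem det_submatrix_ω₂_add_ω₃_ne_zero :
    ((ω₂ + ω₃).submatrix ![1, 2, 3, 4] ![4, 3, 2, 1]).det ≠ 0 := by
  simp only [det_succ_row_zero, Fin.sum_univ_succ, submatrix_apply]
  simp [ω₂, ω₃, wedge, e, vecMulVec_apply, Pi.single_apply, Fin.succAbove]

theorem vecMul_e_five_eq_zero_of_rank_pencil_le (M : Form)
    (hM : ∀ O ∈ pi_5, ∀ t : ℂ, (O + t • M).rank ≤ 4) : e 5 ᵥ* M = 0 := by
  have hperp : ∀ O ∈ pi_5, ∀ I J : Fin 4 → Fin 6, (O.submatrix I J).det ≠ 0 →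
      ∀ v, O *ᵥ v = 0 → (e 5 ᵥ* M) ⬝ᵥ v = 0 := fun O hO I J hIJ v hv => by
    rw [← dotProduct_mulVec]
    exact dotProduct_mulVec_eq_zero_of_rank_add_smul_le O M I J hIJ
      (vecMul_e_five_eq_zero_of_mem_pi_5 hO) hv (hM O hO)
  -- `e 5` and the kernels `e 4, e 2, e 0, e 2 - e 3 + e 4, e 0 - e 1 + e 2` of
  -- `ω₁, ω₂, ω₃, ω₁ + ω₂, ω₂ + ω₃` span `W`.
  obtain ⟨h₅, h₄, h₂, h₀, h₂₃₄, h₀₁₂⟩ : (e 5 ᵥ* M) ⬝ᵥ e 5 = 0 ∧ (e 5 ᵥ* M) ⬝ᵥ e 4 = 0 ∧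
      (e 5 ᵥ* M) ⬝ᵥ e 2 = 0 ∧ (e 5 ᵥ* M) ⬝ᵥ e 0 = 0 ∧ (e 5 ᵥ* M) ⬝ᵥ (e 2 - e 3 + e 4) = 0 ∧
      (e 5 ᵥ* M) ⬝ᵥ (e 0 - e 1 + e 2) = 0 := by
    refine ⟨hperp ω₁ ω₁_mem_pi_5 _ _ det_submatrix_ω₁_ne_zero _ ?_,
      hperp ω₁ ω₁_mem_pi_5 _ _ det_submatrix_ω₁_ne_zero _ ?_,
      hperp ω₂ ω₂_mem_pi_5 _ _ det_submatrix_ω₂_ne_zero _ ?_,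
      hperp ω₃ ω₃_mem_pi_5 _ _ det_submatrix_ω₃_ne_zero _ ?_,
      hperp _ (add_mem ω₁_mem_pi_5 ω₂_mem_pi_5) _ _ det_submatrix_ω₁_add_ω₂_ne_zero _ ?_,
      hperp _ (add_mem ω₂_mem_pi_5 ω₃_mem_pi_5) _ _ det_submatrix_ω₂_add_ω₃_ne_zero _ ?_⟩ <;>
    simp only [ω₁, ω₂, ω₃, add_mulVec, wedge_mulVec] <;> simp [e] <;> abel
  set w := e 5 ᵥ* M
  simp only [e, dotProduct_add, dotProduct_sub, dotProduct_single, mul_one] at h₅ h₄ h₂ h₀ h₂₃₄ h₀₁₂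
  have h₁ : w 1 = 0 := by linear_combination h₀ + h₂ - h₀₁₂
  have h₃ : w 3 = 0 := by linear_combination h₂ + h₄ - h₂₃₄
  ext j
  fin_cases j <;> assumption

theorem statement7_general (A : Submodule ℂ Form)
    (hrk : ∀ M ∈ A, Matrix.rank M ≤ 4)
    (g : GL (Fin 6) ℂ)
    (hg : Submodule.map (actLin (g : Matrix (Fin 6) (Fin 6) ℂ)) pi_5 ≤ A) :
    (∃ u : W, u ≠ 0 ∧ ∀ α ∈ A, u ∈ Form.kernel α) ∧ NonSemistable A := by
  set h := g⁻¹
  have hpencil : ∀ N ∈ A, ∀ O ∈ pi_5, ∀ t : ℂ, (O + t • actLin h N).rank ≤ 4 := by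
    intro N hN O hO t
    have hmem : actLin g O + t • N ∈ A := A.add_mem (hg ⟨O, hO, rfl⟩) (A.smul_mem t hN)
    have hback : O + t • actLin h N = actLin h (actLin g O + t • N) := by
      rw [map_add, map_smul, ← actLin_mul, ← Units.val_mul, mul_inv_cancel, Units.val_one,
        actLin_one_s7]
    exact hback ▸ (rank_actLin_le _ _).trans (hrk _ hmem)
  have hker : ∀ α ∈ A, (h : Matrix (Fin 6) (Fin 6) ℂ) *ᵥ e 5 ∈ α.kernel := fun α hα =>
    (Form.mem_kernel_actLin_iff h α (e 5)).mp
      (Form.mem_kernel_iff.mpr (vecMul_e_five_eq_zero_of_rank_pencil_le _ (hpencil α hα)))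
  have hu : (h : Matrix (Fin 6) (Fin 6) ℂ) *ᵥ e 5 ≠ 0 := by
    intro h0
    have he : e 5 = 0 := mulVec_injective_iff_isUnit.mpr h.isUnit (by rw [h0, mulVec_zero])
    simpa [e] using congrFun he 5
  exact ⟨⟨_, hu, hker⟩, nonSemistable_of_mem_kernel hu hker⟩

/-- a linear system of generic rank ≤ 4 containing a translate of `π₅`
admits a common nonzero kernel vector; in particular it is not semistable. -/
theorem statement7 (A : Submodule ℂ Form) (hA : ∀ M ∈ A, Form.IsSkew M)
    (hrk : ∀ M ∈ A, Matrix.rank M ≤ 4)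
    (g : GL (Fin 6) ℂ)
    (hg : Submodule.map (actLin (g : Matrix (Fin 6) (Fin 6) ℂ)) pi_5 ≤ A) :
    (∃ u : W, u ≠ 0 ∧ ∀ α ∈ A, u ∈ Form.kernel α) ∧ NonSemistable A :=
  statement7_general A hrk g hg
end
end

section
/- Let A ⊆ Λ²W* be a linear subspace such that every ω ∈ A has rank at most 4. If ω ∈ A has rank exactly 4 (so ker(ω) is a 2-dimensional subspace of W), then every α ∈ A satisfies α(k,k') = 0 for all k, k' ∈ ker(ω). -/
open Matrix

noncomputable section

/-!
Let `K = ker ω` and choose a complement `U`. In a basis adapted to `W = K ⊕ U` the Gram matrix of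
`ω + t α` is `[[t α_KK, t α_KU], [t α_UK, ω_UU + t α_UU]]`, where `ω_UU` is invertible because `U`
meets `ker ω` trivially. Pulling `t` out of the first block row gives
`det (ω + t α) = t ^ dim K · p(t)` for a polynomial `p` with `p(0) = det α_KK · det ω_UU`. Hence if
`α` is nondegenerate on `K`, some `ω + t α ∈ A` is invertible, of rank `6 > 4`. When `rk ω = 4`,
`K` is a plane, and `α` is nondegenerate on it as soon as `α(k, k') ≠ 0` for some `k, k' ∈ K`.
-/

section Blocks

variable {m n R : Type*} [Fintype m] [Fintype n] [DecidableEq m] [DecidableEq n]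

theorem Matrix.det_fromBlocks_zero_add_smul [CommRing R] (D : Matrix n n R)
    (G : Matrix (m ⊕ n) (m ⊕ n) R) (t : R) :
    (fromBlocks 0 0 0 D + t • G).det = t ^ Fintype.card m *
      (fromBlocks G.toBlocks₁₁ G.toBlocks₁₂ (t • G.toBlocks₂₁) (D + t • G.toBlocks₂₂)).det := by
  have hfactor : fromBlocks 0 0 0 D + t • G = fromBlocks (t • 1 : Matrix m m R) 0 0 1 *
      fromBlocks G.toBlocks₁₁ G.toBlocks₁₂ (t • G.toBlocks₂₁) (D + t • G.toBlocks₂₂) := by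
    conv_lhs => rw [← fromBlocks_toBlocks G]
    simp [fromBlocks_multiply, fromBlocks_smul, fromBlocks_add]
  rw [hfactor, det_mul, det_fromBlocks_zero₂₁, det_smul, det_one, det_one, mul_one, mul_one]

open Polynomial in
theorem Matrix.exists_det_fromBlocks_zero_add_smul_ne_zero [Field R] [Infinite R]
    {D : Matrix n n R} (hD : D.det ≠ 0) {G : Matrix (m ⊕ n) (m ⊕ n) R}
    (hG : G.toBlocks₁₁.det ≠ 0) : ∃ t : R, (fromBlocks 0 0 0 D + t • G).det ≠ 0 := by
  set p : R[X] := (fromBlocks (G.toBlocks₁₁.map C) (G.toBlocks₁₂.map C)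
    ((X : R[X]) • G.toBlocks₂₁.map C) (D.map C + (X : R[X]) • G.toBlocks₂₂.map C)).det
  have hp : ∀ t : R, p.eval t = (fromBlocks G.toBlocks₁₁ G.toBlocks₁₂ (t • G.toBlocks₂₁)
      (D + t • G.toBlocks₂₂)).det := fun t => by
    rw [← coe_evalRingHom, RingHom.map_det]
    congr 1
    ext (i | i) (j | j) <;>
      simp only [RingHom.mapMatrix_apply, coe_evalRingHom, map_apply, fromBlocks_apply₁₁,
        fromBlocks_apply₁₂, fromBlocks_apply₂₁, fromBlocks_apply₂₂, add_apply, smul_apply,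
        smul_eq_mul, eval_add, eval_mul, eval_C, eval_X]
  have hp0 : p ≠ 0 := fun h => by
    simpa [h, det_fromBlocks_zero₂₁, hD, hG] using hp 0
  obtain ⟨t, ht⟩ : ∃ t : R, (X ^ Fintype.card m * p).eval t ≠ 0 := by
    by_contra! h
    exact mul_ne_zero (pow_ne_zero _ X_ne_zero) hp0 (zero_of_eval_zero _ h)
  refine ⟨t, ?_⟩
  rwa [det_fromBlocks_zero_add_smul, ← hp, eval_mul, eval_pow, eval_X] at *

end Blocks

section AlternatingForms

variable {K V : Type*} [Field K] [AddCommGroup V] [Module K V] {B : LinearMap.BilinForm K V}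

theorem LinearMap.BilinForm.IsAlt.linearIndependent_pair (hB : B.IsAlt) {x y : V}
    (hxy : B x y ≠ 0) : LinearIndependent K ![x, y] := by
  rw [LinearIndependent.pair_iff]
  intro s t hst
  have hs : s * B x y = 0 := by
    simpa [hB.self_eq_zero] using congrArg (fun v => B v y) hst
  have ht : t * B x y = 0 := by
    simpa [hB.self_eq_zero] using congrArg (fun v => B x v) hst
  exact ⟨(mul_eq_zero.mp hs).resolve_right hxy, (mul_eq_zero.mp ht).resolve_right hxy⟩

theorem LinearMap.BilinForm.IsAlt.nondegenerate_of_finrank_eq_two (hB : B.IsAlt)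
    (hV : Module.finrank K V = 2) {x y : V} (hxy : B x y ≠ 0) : B.Nondegenerate := by
  let b := basisOfLinearIndependentOfCardEqFinrank (hB.linearIndependent_pair hxy)
    (by rw [hV, Fintype.card_fin])
  rw [LinearMap.BilinForm.nondegenerate_iff_det_ne_zero b, det_fin_two]
  simp [b, LinearMap.BilinForm.toMatrix_apply, hB.self_eq_zero, ← hB.neg_eq x y, hxy]

end AlternatingForms

theorem Matrix.finrank_ker_mulVecLin_transpose_add_rank {m n K : Type*} [Fintype m] [Fintype n]
    [Field K] (M : Matrix m n K) :
    Module.finrank K (LinearMap.ker Mᵀ.mulVecLin) + M.rank = Fintype.card m := by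
  rw [← rank_transpose, Matrix.rank, add_comm, LinearMap.finrank_range_add_finrank_ker,
    Module.finrank_fintype_fun_eq_card]

section SkewMatrices

variable {n K : Type*} [Fintype n] [DecidableEq n] [Field K] {M : Matrix n n K}

theorem Matrix.mem_ker_mulVecLin_transpose_iff {x : n → K} :
    x ∈ LinearMap.ker Mᵀ.mulVecLin ↔ ∀ y, toBilin' M x y = 0 := by
  simp only [LinearMap.mem_ker, mulVecLin_apply, toBilin'_apply', dotProduct_mulVec,
    mulVec_transpose, dotProduct_eq_zero_iff]

theorem Matrix.toBilin'_swap_of_transpose_eq_neg (hM : Mᵀ = -M) (x y : n → K) :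
    toBilin' M y x = -toBilin' M x y := by
  rw [toBilin'_apply', toBilin'_apply', dotProduct_mulVec, ← mulVec_transpose, hM,
    neg_mulVec, neg_dotProduct, dotProduct_comm]

theorem Matrix.isRefl_toBilin'_of_transpose_eq_neg (hM : Mᵀ = -M) :
    (toBilin' M).IsRefl := fun x y h => by
  rw [toBilin'_swap_of_transpose_eq_neg hM, h, neg_zero]

theorem Matrix.isAlt_toBilin'_of_transpose_eq_neg [NeZero (2 : K)] (hM : Mᵀ = -M) :
    (toBilin' M).IsAlt := fun x => by
  have h : (2 : K) * toBilin' M x x = 0 := by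
    linear_combination toBilin'_swap_of_transpose_eq_neg hM x x
  exact (mul_eq_zero.mp h).resolve_left two_ne_zero

theorem Matrix.nondegenerate_domRestrict₁₂_of_isCompl_ker {ω : Matrix n n K} (hω : ωᵀ = -ω)
    {U : Submodule K (n → K)} (hU : IsCompl (LinearMap.ker ωᵀ.mulVecLin) U) :
    ((toBilin' ω).domRestrict₁₂ U U).Nondegenerate := by
  refine LinearMap.nondegenerate_restrict_of_disjoint_orthogonal
    (isRefl_toBilin'_of_transpose_eq_neg hω) ?_
  rw [Submodule.disjoint_def]
  intro x hxU hx
  have hxker : x ∈ LinearMap.ker ωᵀ.mulVecLin := by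
    rw [mem_ker_mulVecLin_transpose_iff]
    intro y
    rw [← neg_eq_zero, ← toBilin'_swap_of_transpose_eq_neg hω]
    obtain ⟨y₁, hy₁, y₂, hy₂, rfl⟩ :=
      Submodule.mem_sup.mp (hU.sup_eq_top ▸ Submodule.mem_top : y ∈ _ ⊔ U)
    rw [map_add, LinearMap.add_apply, mem_ker_mulVecLin_transpose_iff.mp hy₁, hx y₂ hy₂,
      add_zero]
  exact (Submodule.disjoint_def.mp hU.disjoint) x hxker hxU

theorem Matrix.exists_det_add_smul_ne_zero_of_nondegenerate_ker [Infinite K]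
    {ω α : Matrix n n K} (hω : ωᵀ = -ω)
    (hα : ((toBilin' α).domRestrict₁₂ (LinearMap.ker ωᵀ.mulVecLin)
      (LinearMap.ker ωᵀ.mulVecLin)).Nondegenerate) :
    ∃ t : K, (ω + t • α).det ≠ 0 := by
  set N := LinearMap.ker ωᵀ.mulVecLin
  obtain ⟨U, hU⟩ := Submodule.exists_isCompl N
  let bN := Module.finBasis K N
  let bU := Module.finBasis K U
  let b := (bN.prod bU).map (N.prodEquivOfIsCompl U hU)
  have hb_inl (i) : b (Sum.inl i) = bN i := by simp [b]
  have hb_inr (j) : b (Sum.inr j) = bU j := by simp [b]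
  let gram (M : Matrix n n K) := LinearMap.BilinForm.toMatrix b (toBilin' M)
  have hω_left (i) (v : n → K) : toBilin' ω (bN i) v = 0 :=
    mem_ker_mulVecLin_transpose_iff.mp (bN i).2 v
  have hω_right (i) (v : n → K) : toBilin' ω v (bN i) = 0 := by
    rw [toBilin'_swap_of_transpose_eq_neg hω, hω_left, neg_zero]
  have hgram_ω : gram ω = fromBlocks 0 0 0
      (LinearMap.BilinForm.toMatrix bU ((toBilin' ω).domRestrict₁₂ U U)) := by
    ext (i | i) (j | j) <;>
      simp [gram, LinearMap.BilinForm.toMatrix_apply, hb_inl, hb_inr, hω_left, hω_right,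
        LinearMap.domRestrict₁₂_apply]
  have hgram_α : (gram α).toBlocks₁₁ =
      LinearMap.BilinForm.toMatrix bN ((toBilin' α).domRestrict₁₂ N N) := by
    ext i j
    simp [gram, toBlocks₁₁, LinearMap.BilinForm.toMatrix_apply, hb_inl,
      LinearMap.domRestrict₁₂_apply]
  obtain ⟨t, ht⟩ := exists_det_fromBlocks_zero_add_smul_ne_zero
    ((LinearMap.BilinForm.nondegenerate_iff_det_ne_zero bU).mp
      (nondegenerate_domRestrict₁₂_of_isCompl_ker hω hU))
    (hgram_α ▸ (LinearMap.BilinForm.nondegenerate_iff_det_ne_zero bN).mp hα)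
  refine ⟨t, ?_⟩
  rw [← LinearMap.BilinForm.nondegenerate_toBilin'_iff_det_ne_zero,
    LinearMap.BilinForm.nondegenerate_iff_det_ne_zero b]
  rw [← hgram_ω] at ht
  simpa [gram] using ht

end SkewMatrices

theorem Form.apply_eq_toBilin' (M : Form) (u v : W) : Form.apply M u v = toBilin' M u v :=
  (toBilin'_apply' M u v).symm

/-- in a linear system of generic rank ≤ 4, the kernel of a rank-4 member
is isotropic for every member. -/
theorem statement8 (A : Submodule ℂ Form) (hA : ∀ M ∈ A, Form.IsSkew M)
    (hrk : ∀ M ∈ A, Matrix.rank M ≤ 4)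
    (ω : Form) (hωA : ω ∈ A) (hωrk : Matrix.rank ω = 4) :
    ∀ α ∈ A, ∀ k ∈ Form.kernel ω, ∀ k' ∈ Form.kernel ω, Form.apply α k k' = 0 := by
  intro α hαA k hk k' hk'
  by_contra hkk'
  rw [Form.apply_eq_toBilin'] at hkk'
  have hker : Module.finrank ℂ (Form.kernel ω) = 2 := by
    change Module.finrank ℂ (LinearMap.ker ωᵀ.mulVecLin) = 2
    have := finrank_ker_mulVecLin_transpose_add_rank ω
    rw [hωrk, Fintype.card_fin] at this
    omega
  have hαK : ((toBilin' α).domRestrict₁₂ (Form.kernel ω) (Form.kernel ω)).Nondegenerate :=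
    LinearMap.BilinForm.IsAlt.nondegenerate_of_finrank_eq_two
      (fun x => isAlt_toBilin'_of_transpose_eq_neg (hA α hαA) x) hker
      (x := ⟨k, hk⟩) (y := ⟨k', hk'⟩) hkk'
  obtain ⟨t, ht⟩ := exists_det_add_smul_ne_zero_of_nondegenerate_ker (hA ω hωA) hαK
  have hrank6 := rank_of_det_ne_zero ht
  have hrank4 := hrk _ (A.add_mem hωA (A.smul_mem t hαA))
  rw [Fintype.card_fin] at hrank6
  omega
end
end

section
/- There is no pair (u, U') consisting of a nonzero vector u ∈ W and a 5-dimensional linear subspace U' ⊆ W such that ω(u, u') = 0 for every ω ∈ π_g and every u' ∈ U'. Equivalently, for every nonzero u ∈ W the three linear forms ω₀(u,·), ω₁(u,·), ω₂(u,·) ∈ W* span a subspace of dimension at least 2, where ω₀ = e₁∧e₄ + e₂∧e₅, ω₁ = e₁∧e₆ + e₃∧e₅, ω₂ = e₂∧e₆ − e₃∧e₄. -/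
open Matrix

noncomputable section

/-- Dot product with a fixed vector, as a linear functional. -/
def dpl (w : W) : W →ₗ[ℂ] ℂ where
  toFun v := w ⬝ᵥ v
  map_add' x y := by simp [dotProduct_add]
  map_smul' c x := by simp

/-- Two linear functionals vanishing on a common 5-dimensional subspace of `W`
are proportional, hence all their 2×2 "minors" vanish. -/
lemma pairprop (U' : Submodule ℂ W) (h5 : Module.finrank ℂ U' = 5)
    (φ ψ : W →ₗ[ℂ] ℂ) (hφ : ∀ x ∈ U', φ x = 0) (hψ : ∀ x ∈ U', ψ x = 0)
    (v w : W) : φ v * ψ w = ψ v * φ w := by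
  by_cases h0 : φ = 0
  · simp [h0]
  have hU : U' ≤ LinearMap.ker φ := fun x hx => hφ x hx
  have hW : Module.finrank ℂ W = 6 := Module.finrank_fin_fun ℂ
  have hr : Module.finrank ℂ (LinearMap.range φ) = 1 := by
    have hle : Module.finrank ℂ (LinearMap.range φ) ≤ 1 := by
      simpa using Submodule.finrank_le (LinearMap.range φ)
    have hpos : 0 < Module.finrank ℂ (LinearMap.range φ) := by
      rw [Module.finrank_pos_iff]
      rw [Submodule.nontrivial_iff_ne_bot, Ne, LinearMap.range_eq_bot]
      exact h0
    omega
  have hk : Module.finrank ℂ (LinearMap.ker φ) = 5 := by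
    have := LinearMap.finrank_range_add_finrank_ker φ
    rw [hW, hr] at this; omega
  have hEq : U' = LinearMap.ker φ :=
    Submodule.eq_of_le_of_finrank_le hU (by rw [hk, h5])
  obtain ⟨v₀, hv₀⟩ := DFunLike.ne_iff.1 h0
  have hv₀ : φ v₀ ≠ 0 := by simpa using hv₀
  have key : ∀ x, φ v₀ * ψ x = ψ v₀ * φ x := by
    intro x
    have hmem : φ v₀ • x - φ x • v₀ ∈ LinearMap.ker φ := by
      simp [LinearMap.mem_ker, mul_comm]
    have := hψ _ (hEq ▸ hmem)
    simp only [map_sub, LinearMap.map_smul, smul_eq_mul] at this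
    have := sub_eq_zero.1 this
    rw [this]; ring
  have : φ v₀ * (φ v * ψ w) = φ v₀ * (ψ v * φ w) := by
    linear_combination φ v * key w - φ w * key v
  exact mul_left_cancel₀ hv₀ this

/-- Proposition 3.7: no pair `(u, U')` with `u ≠ 0` and `dim U' = 5`
satisfies `ω(u,u') = 0` for all `ω ∈ π_g`, `u' ∈ U'`. -/
theorem statement9 :
    ¬ ∃ (u : W) (U' : Submodule ℂ W), u ≠ 0 ∧ Module.finrank ℂ U' = 5 ∧
      ∀ ω ∈ pi_g, ∀ u' ∈ U', Form.apply ω u u' = 0 := by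
  rintro ⟨u, U', hu, h5, hann⟩
  set ω0 : Form := wedge (e 0) (e 3) + wedge (e 1) (e 4) with hω0
  set ω1 : Form := wedge (e 0) (e 5) + wedge (e 2) (e 4) with hω1
  set ω2 : Form := wedge (e 1) (e 5) - wedge (e 2) (e 3) with hω2
  have hm0 : ω0 ∈ pi_g := Submodule.subset_span (by left; rfl)
  have hm1 : ω1 ∈ pi_g := Submodule.subset_span (by right; left; rfl)
  have hm2 : ω2 ∈ pi_g := Submodule.subset_span (by right; right; rfl)
  have hv : ∀ ω ∈ pi_g, ∀ x ∈ U', dpl (u ᵥ* ω) x = 0 := by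
    intro ω hω x hx
    have := hann ω hω x hx
    simpa [dpl, Form.apply, dotProduct_mulVec] using this
  have E01 := pairprop U' h5 _ _ (hv ω0 hm0) (hv ω1 hm1)
  have E02 := pairprop U' h5 _ _ (hv ω0 hm0) (hv ω2 hm2)
  have E12 := pairprop U' h5 _ _ (hv ω1 hm1) (hv ω2 hm2)
  have h0 : u 0 = 0 := by
    have := E01 (e 3) (e 5)
    simp [dpl, hω0, hω1, hω2, wedge, vecMul, dotProduct, e, Matrix.add_apply, Matrix.sub_apply,
      vecMulVec_apply, Fin.sum_univ_six, Pi.single_apply] at this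
    exact this
  have h1 : u 1 = 0 := by
    have := E02 (e 4) (e 5)
    simp [dpl, hω0, hω1, hω2, wedge, vecMul, dotProduct, e, Matrix.add_apply, Matrix.sub_apply,
      vecMulVec_apply, Fin.sum_univ_six, Pi.single_apply] at this
    exact this
  have h2 : u 2 = 0 := by
    have := E12 (e 4) (e 3)
    simp [dpl, hω0, hω1, hω2, wedge, vecMul, dotProduct, e, Matrix.add_apply, Matrix.sub_apply,
      vecMulVec_apply, Fin.sum_univ_six, Pi.single_apply] at this
    exact this
  have h3 : u 3 = 0 := by
    have := E02 (e 0) (e 2)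
    simp [dpl, hω0, hω1, hω2, wedge, vecMul, dotProduct, e, Matrix.add_apply, Matrix.sub_apply,
      vecMulVec_apply, Fin.sum_univ_six, Pi.single_apply] at this
    exact this
  have h4 : u 4 = 0 := by
    have := E01 (e 1) (e 2)
    simp [dpl, hω0, hω1, hω2, wedge, vecMul, dotProduct, e, Matrix.add_apply, Matrix.sub_apply,
      vecMulVec_apply, Fin.sum_univ_six, Pi.single_apply] at this
    exact this
  have h5 : u 5 = 0 := by
    have := E12 (e 0) (e 1)
    simp [dpl, hω0, hω1, hω2, wedge, vecMul, dotProduct, e, Matrix.add_apply, Matrix.sub_apply,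
      vecMulVec_apply, Fin.sum_univ_six, Pi.single_apply] at this
    exact this
  exact hu (funext fun i => by fin_cases i <;> assumption)
end
end

section
/- Let U ⊆ W be a 3-dimensional linear subspace such that ω(u,u') = 0 for every ω ∈ π_g and all u, u' ∈ U. Then there exist complex numbers α₁,…,α₆ with (α₃,α₆) ≠ (0,0), (α₂,α₄) ≠ (0,0), (α₁,α₅) ≠ (0,0), such that U = span(α₃u₃ + α₆u₆, α₂u₂ + α₄u₄, α₁u₁ + α₅u₅) and the equations α₂α₅ − α₄α₁ = 0, α₃α₅ − α₆α₁ = 0, α₆α₂ + α₃α₄ = 0 hold. -/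
open Matrix

noncomputable section

set_option maxHeartbeats 1000000

-- AUX

lemma exists_zero2 (U : Submodule ℂ W) (hU : Module.finrank ℂ U = 3) (i j : Fin 6) :
    ∃ w ∈ U, w ≠ 0 ∧ w i = 0 ∧ w j = 0 := by
  let f : U →ₗ[ℂ] ℂ × ℂ :=
  { toFun := fun u => (u.1 i, u.1 j)
    map_add' := by intro a b; simp
    map_smul' := by intro c a; simp }
  have hker : LinearMap.ker f ≠ ⊥ := by
    intro h
    have hinj : Function.Injective f := LinearMap.ker_eq_bot.mp h
    have := LinearMap.finrank_le_finrank_of_injective hinj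
    rw [hU] at this
    have h2 : Module.finrank ℂ (ℂ × ℂ) = 2 := by simp
    omega
  obtain ⟨⟨w, hwU⟩, hwker, hw0⟩ := Submodule.exists_mem_ne_zero_of_ne_bot hker
  refine ⟨w, hwU, ?_, ?_, ?_⟩
  · intro h; apply hw0; ext; simp [h]
  · exact congrArg Prod.fst (LinearMap.mem_ker.mp hwker)
  · exact congrArg Prod.snd (LinearMap.mem_ker.mp hwker)

lemma pick (U : Submodule ℂ W) (i j : Fin 6)
    (hC : ∀ u ∈ U, ∀ v ∈ U, u i * v j - u j * v i = 0) :
    ∃ k : Fin 6, (k = i ∨ k = j) ∧ ∀ u ∈ U, u k = 0 → u i = 0 ∧ u j = 0 := by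
  by_cases h : ∃ p ∈ U, p i ≠ 0
  · obtain ⟨p, hp, hpi⟩ := h
    refine ⟨i, Or.inl rfl, fun u hu hui => ⟨hui, ?_⟩⟩
    have h1 := hC u hu p hp
    have h2 : u j * p i = 0 := by linear_combination -h1 + p j * hui
    exact (mul_eq_zero.mp h2).resolve_right hpi
  · push_neg at h
    exact ⟨j, Or.inr rfl, fun u hu huj => ⟨h u hu, huj⟩⟩


/-- Lemma 3.8: description of the 3-dimensional subspaces of `W`
isotropic with respect to every form in `π_g`. -/
theorem statement10 (U : Submodule ℂ W) (hU : Module.finrank ℂ U = 3)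
    (hiso : ∀ ω ∈ pi_g, ∀ u ∈ U, ∀ u' ∈ U, Form.apply ω u u' = 0) :
    ∃ a1 a2 a3 a4 a5 a6 : ℂ,
      (a3, a6) ≠ (0, 0) ∧ (a2, a4) ≠ (0, 0) ∧ (a1, a5) ≠ (0, 0) ∧
      U = Submodule.span ℂ
        {a3 • e 2 + a6 • e 5, a2 • e 1 + a4 • e 3, a1 • e 0 + a5 • e 4} ∧
      a2 * a5 - a4 * a1 = 0 ∧ a3 * a5 - a6 * a1 = 0 ∧ a6 * a2 + a3 * a4 = 0 := by
  -- the three fundamental bilinear identities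
  have E1 : ∀ u ∈ U, ∀ v ∈ U,
      u 0 * v 3 - u 3 * v 0 + u 1 * v 4 - u 4 * v 1 = 0 := by
    intro u hu v hv
    have h := hiso _ (Submodule.subset_span (Set.mem_insert _ _)) u hu v hv
    simp [Form.apply, wedge, e, dotProduct, mulVec, vecMulVec, Fin.sum_univ_six,
      Pi.single_apply] at h
    linear_combination h
  have E2 : ∀ u ∈ U, ∀ v ∈ U,
      u 0 * v 5 - u 5 * v 0 + u 2 * v 4 - u 4 * v 2 = 0 := by
    intro u hu v hv
    have h := hiso _ (Submodule.subset_span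
      (Set.mem_insert_of_mem _ (Set.mem_insert _ _))) u hu v hv
    simp [Form.apply, wedge, e, dotProduct, mulVec, vecMulVec, Fin.sum_univ_six,
      Pi.single_apply] at h
    linear_combination h
  have E3 : ∀ u ∈ U, ∀ v ∈ U,
      u 1 * v 5 - u 5 * v 1 - u 2 * v 3 + u 3 * v 2 = 0 := by
    intro u hu v hv
    have h := hiso _ (Submodule.subset_span
      (Set.mem_insert_of_mem _ (Set.mem_insert_of_mem _ rfl))) u hu v hv
    simp [Form.apply, wedge, e, dotProduct, mulVec, vecMulVec, Fin.sum_univ_six,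
      Pi.single_apply] at h
    linear_combination h
  -- collinearity in each coordinate plane
  have C1 : ∀ u ∈ U, ∀ v ∈ U, u 0 * v 4 - u 4 * v 0 = 0 := by
    intro u hu v hv
    by_contra hd
    obtain ⟨w, hwU, hw0, hwi, hwj⟩ := exists_zero2 U hU 0 4
    have h1 : w 1 * u 4 = w 3 * u 0 := by
      linear_combination E1 w hwU u hu - u 3 * hwi + u 1 * hwj
    have h2 : w 1 * v 4 = w 3 * v 0 := by
      linear_combination E1 w hwU v hv - v 3 * hwi + v 1 * hwj
    have h3 : w 2 * u 4 = w 5 * u 0 := by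
      linear_combination E2 w hwU u hu - u 5 * hwi + u 2 * hwj
    have h4 : w 2 * v 4 = w 5 * v 0 := by
      linear_combination E2 w hwU v hv - v 5 * hwi + v 2 * hwj
    have e1 : w 1 * (u 0 * v 4 - u 4 * v 0) = 0 := by
      linear_combination u 0 * h2 - v 0 * h1
    have e3 : w 3 * (u 0 * v 4 - u 4 * v 0) = 0 := by
      linear_combination u 4 * h2 - v 4 * h1
    have e2 : w 2 * (u 0 * v 4 - u 4 * v 0) = 0 := by
      linear_combination u 0 * h4 - v 0 * h3
    have e5 : w 5 * (u 0 * v 4 - u 4 * v 0) = 0 := by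
      linear_combination u 4 * h4 - v 4 * h3
    have z1 := (mul_eq_zero.mp e1).resolve_right hd
    have z2 := (mul_eq_zero.mp e2).resolve_right hd
    have z3 := (mul_eq_zero.mp e3).resolve_right hd
    have z5 := (mul_eq_zero.mp e5).resolve_right hd
    exact hw0 (by funext k; fin_cases k <;> assumption)
  have C2 : ∀ u ∈ U, ∀ v ∈ U, u 1 * v 3 - u 3 * v 1 = 0 := by
    intro u hu v hv
    by_contra hd
    obtain ⟨w, hwU, hw0, hwi, hwj⟩ := exists_zero2 U hU 1 3
    have h1 : w 0 * u 3 = w 4 * u 1 := by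
      linear_combination E1 w hwU u hu + u 0 * hwj - u 4 * hwi
    have h2 : w 0 * v 3 = w 4 * v 1 := by
      linear_combination E1 w hwU v hv + v 0 * hwj - v 4 * hwi
    have h3 : w 5 * u 1 + w 2 * u 3 = 0 := by
      linear_combination -(E3 w hwU u hu) + u 5 * hwi + u 2 * hwj
    have h4 : w 5 * v 1 + w 2 * v 3 = 0 := by
      linear_combination -(E3 w hwU v hv) + v 5 * hwi + v 2 * hwj
    have e0 : w 0 * (u 1 * v 3 - u 3 * v 1) = 0 := by
      linear_combination u 1 * h2 - v 1 * h1
    have e4 : w 4 * (u 1 * v 3 - u 3 * v 1) = 0 := by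
      linear_combination u 3 * h2 - v 3 * h1
    have e5 : w 5 * (u 1 * v 3 - u 3 * v 1) = 0 := by
      linear_combination v 3 * h3 - u 3 * h4
    have e2 : w 2 * (u 1 * v 3 - u 3 * v 1) = 0 := by
      linear_combination u 1 * h4 - v 1 * h3
    have z0 := (mul_eq_zero.mp e0).resolve_right hd
    have z4 := (mul_eq_zero.mp e4).resolve_right hd
    have z5 := (mul_eq_zero.mp e5).resolve_right hd
    have z2 := (mul_eq_zero.mp e2).resolve_right hd
    exact hw0 (by funext k; fin_cases k <;> assumption)
  have C3 : ∀ u ∈ U, ∀ v ∈ U, u 2 * v 5 - u 5 * v 2 = 0 := by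
    intro u hu v hv
    by_contra hd
    obtain ⟨w, hwU, hw0, hwi, hwj⟩ := exists_zero2 U hU 2 5
    have h1 : w 0 * u 5 = w 4 * u 2 := by
      linear_combination E2 w hwU u hu + u 0 * hwj - u 4 * hwi
    have h2 : w 0 * v 5 = w 4 * v 2 := by
      linear_combination E2 w hwU v hv + v 0 * hwj - v 4 * hwi
    have h3 : w 1 * u 5 + w 3 * u 2 = 0 := by
      linear_combination E3 w hwU u hu + u 1 * hwj + u 3 * hwi
    have h4 : w 1 * v 5 + w 3 * v 2 = 0 := by
      linear_combination E3 w hwU v hv + v 1 * hwj + v 3 * hwi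
    have e0 : w 0 * (u 2 * v 5 - u 5 * v 2) = 0 := by
      linear_combination u 2 * h2 - v 2 * h1
    have e4 : w 4 * (u 2 * v 5 - u 5 * v 2) = 0 := by
      linear_combination u 5 * h2 - v 5 * h1
    have e1 : w 1 * (u 2 * v 5 - u 5 * v 2) = 0 := by
      linear_combination u 2 * h4 - v 2 * h3
    have e3 : w 3 * (u 2 * v 5 - u 5 * v 2) = 0 := by
      linear_combination v 5 * h3 - u 5 * h4
    have z0 := (mul_eq_zero.mp e0).resolve_right hd
    have z4 := (mul_eq_zero.mp e4).resolve_right hd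
    have z1 := (mul_eq_zero.mp e1).resolve_right hd
    have z3 := (mul_eq_zero.mp e3).resolve_right hd
    exact hw0 (by funext k; fin_cases k <;> assumption)
  -- pick functionals detecting each plane
  obtain ⟨k1, _, Hk1⟩ := pick U 0 4 C1
  obtain ⟨k2, _, Hk2⟩ := pick U 1 3 C2
  obtain ⟨k3, _, Hk3⟩ := pick U 2 5 C3
  -- the three basis vectors
  obtain ⟨vc, hvcU, hvc0, hvck1, hvck2⟩ := exists_zero2 U hU k1 k2
  obtain ⟨vb, hvbU, hvb0, hvbk1, hvbk3⟩ := exists_zero2 U hU k1 k3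
  obtain ⟨va, hvaU, hva0, hvak2, hvak3⟩ := exists_zero2 U hU k2 k3
  obtain ⟨hvc04, hvc44⟩ := Hk1 vc hvcU hvck1
  obtain ⟨hvc1, hvc3⟩ := Hk2 vc hvcU hvck2
  obtain ⟨hvb0', hvb4⟩ := Hk1 vb hvbU hvbk1
  obtain ⟨hvb2, hvb5⟩ := Hk3 vb hvbU hvbk3
  obtain ⟨hva1, hva3⟩ := Hk2 va hvaU hvak2
  obtain ⟨hva2, hva5⟩ := Hk3 va hvaU hvak3
  refine ⟨va 0, vb 1, vc 2, vb 3, va 4, vc 5, ?_, ?_, ?_, ?_, ?_, ?_, ?_⟩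
  · -- (a3, a6) ≠ 0
    intro h
    rw [Prod.mk.injEq] at h
    obtain ⟨h1, h2⟩ := h
    exact hvc0 (by funext k; fin_cases k <;> assumption)
  · intro h
    rw [Prod.mk.injEq] at h
    obtain ⟨h1, h2⟩ := h
    exact hvb0 (by funext k; fin_cases k <;> assumption)
  · intro h
    rw [Prod.mk.injEq] at h
    obtain ⟨h1, h2⟩ := h
    exact hva0 (by funext k; fin_cases k <;> assumption)
  · -- span equality
    have hceq : vc = vc 2 • e 2 + vc 5 • e 5 := by
      funext k; fin_cases k <;> simp [e, Pi.single_apply] <;> assumption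
    have hbeq : vb = vb 1 • e 1 + vb 3 • e 3 := by
      funext k; fin_cases k <;> simp [e, Pi.single_apply] <;> assumption
    have haeq : va = va 0 • e 0 + va 4 • e 4 := by
      funext k; fin_cases k <;> simp [e, Pi.single_apply] <;> assumption
    have hle : Submodule.span ℂ
        {vc 2 • e 2 + vc 5 • e 5, vb 1 • e 1 + vb 3 • e 3, va 0 • e 0 + va 4 • e 4} ≤ U := by
      rw [Submodule.span_le]
      intro x hx
      simp only [Set.mem_insert_iff, Set.mem_singleton_iff] at hx
      rcases hx with rfl | rfl | rfl
      · rwa [← hceq]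
      · rwa [← hbeq]
      · rwa [← haeq]
    have hli : LinearIndependent ℂ
        ![vc 2 • e 2 + vc 5 • e 5, vb 1 • e 1 + vb 3 • e 3, va 0 • e 0 + va 4 • e 4] := by
      rw [Fintype.linearIndependent_iff]
      intro g hg
      have t0 := congrFun hg 0
      have t1 := congrFun hg 1
      have t2 := congrFun hg 2
      have t3 := congrFun hg 3
      have t4 := congrFun hg 4
      have t5 := congrFun hg 5
      simp [Fin.sum_univ_three, e, Pi.single_apply, -mul_eq_zero, -smul_eq_zero,
        Matrix.vecHead, Matrix.vecTail] at t0 t1 t2 t3 t4 t5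
      have hg0 : g 0 = 0 := by
        rcases mul_eq_zero.mp t2 with h | h
        · exact h
        · rcases mul_eq_zero.mp t5 with h' | h'
          · exact h'
          · exact absurd (show vc = 0 by funext k; fin_cases k <;> assumption) hvc0
      have hg1 : g 1 = 0 := by
        rcases mul_eq_zero.mp t1 with h | h
        · exact h
        · rcases mul_eq_zero.mp t3 with h' | h'
          · exact h'
          · exact absurd (show vb = 0 by funext k; fin_cases k <;> assumption) hvb0
      have hg2 : g 2 = 0 := by
        rcases mul_eq_zero.mp t0 with h | h
        · exact h
        · rcases mul_eq_zero.mp t4 with h' | h'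
          · exact h'
          · exact absurd (show va = 0 by funext k; fin_cases k <;> assumption) hva0
      intro i; fin_cases i <;> assumption
    have hrange : Set.range
        ![vc 2 • e 2 + vc 5 • e 5, vb 1 • e 1 + vb 3 • e 3, va 0 • e 0 + va 4 • e 4] =
        {vc 2 • e 2 + vc 5 • e 5, vb 1 • e 1 + vb 3 • e 3, va 0 • e 0 + va 4 • e 4} := by
      simp only [Matrix.range_cons, Matrix.range_empty, Set.union_singleton,
        Set.union_empty, Set.union_insert]
      ext x
      simp only [Set.mem_insert_iff, Set.mem_singleton_iff]
      tauto
    have hfr := finrank_span_eq_card hli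
    rw [hrange] at hfr
    exact (Submodule.eq_of_le_of_finrank_le hle (by rw [hU, hfr]; simp)).symm
  · linear_combination -(E1 va hvaU vb hvbU) - vb 0 * hva3 + vb 4 * hva1
  · linear_combination -(E2 va hvaU vc hvcU) - vc 0 * hva5 + vc 4 * hva2
  · linear_combination E3 vb hvbU vc hvcU + vc 1 * hvb5 + vc 3 * hvb2
end
end

section
/- Let A₁ = span(e₁∧e₄ + e₂∧e₅, e₁∧e₆ + e₃∧e₅, e₂∧e₆ − e₃∧e₄, e₁∧e₂, e₄∧e₅) and A₂ = span(e₁∧e₄ + e₂∧e₅, e₁∧e₆ + e₃∧e₅, e₂∧e₆ − e₃∧e₄, (e₁−e₅)∧(e₂+e₄), (e₁−e₅)∧(e₃+e₆)) in Λ²W*. Then: (i) the set of elements of A₁ of rank at most 2 equals the cone {λ·(t₀e₁ − t₁e₅)∧(t₀e₂ + t₁e₄) : λ, t₀, t₁ ∈ ℂ}; (ii) the set of elements of A₂ of rank at most 2 is the union of two 2-dimensional linear subspaces of A₂ whose intersection is {0}. -/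
open Matrix

noncomputable section

/-- The first stable 4-dimensional (projective) model. -/
def A1 : Submodule ℂ Form :=
  Submodule.span ℂ {wedge (e 0) (e 3) + wedge (e 1) (e 4),
    wedge (e 0) (e 5) + wedge (e 2) (e 4),
    wedge (e 1) (e 5) - wedge (e 2) (e 3),
    wedge (e 0) (e 1), wedge (e 3) (e 4)}

/-- The second stable 4-dimensional (projective) model. -/
def A2 : Submodule ℂ Form :=
  Submodule.span ℂ {wedge (e 0) (e 3) + wedge (e 1) (e 4),
    wedge (e 0) (e 5) + wedge (e 2) (e 4),
    wedge (e 1) (e 5) - wedge (e 2) (e 3),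
    wedge (e 0 - e 4) (e 1 + e 3),
    wedge (e 0 - e 4) (e 2 + e 5)}

/-!
Both `A1` and `A2` have five coordinates `a, b, c, d, f` (the coefficients of their generators),
and a form of rank at most `2` has all its `3 × 3` minors equal to zero. A few of these minors
already force, for `A1`, `b = c = 0` and `d f = a²`, a conic parametrised by `(t₀², t₀ t₁, t₁²)`;
for `A2` they force `c = 0` and either `a = b = 0` or `(a, b) = (-2d, -2f)`, which are the planes
`(e₁ - e₅) ∧ ⟨e₂ + e₄, e₃ + e₆⟩` and `(e₁ + e₅) ∧ ⟨e₂ - e₄, e₃ - e₆⟩`. Conversely every form in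
these sets is a single wedge, hence of rank at most `2`.
-/

section Rank

variable {K : Type*} [Field K] {m n : Type*} [Fintype n]

theorem Matrix.rank_vecMulVec_sub_vecMulVec_le (u v : n → K) :
    (vecMulVec u v - vecMulVec v u).rank ≤ 2 := by
  have hfactor : vecMulVec u v - vecMulVec v u =
      (of fun i (k : Fin 2) => if k = 0 then u i else v i) *
        (of fun (k : Fin 2) j => if k = 0 then v j else -u j) := by
    ext i j
    simp [vecMulVec_apply, mul_apply, Fin.sum_univ_two]
    ring
  rw [hfactor]
  exact (rank_mul_le_left _ _).trans ((rank_le_card_width _).trans (by simp))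

theorem Matrix.det_submatrix_eq_zero_of_rank_lt {M : Matrix m n K} {k : ℕ}
    (r : Fin k → m) (c : Fin k → n) (h : M.rank < k) : (M.submatrix r c).det = 0 := by
  by_contra hdet
  have hunit : IsUnit (M.submatrix r c) :=
    (isUnit_iff_isUnit_det _).mpr (isUnit_iff_ne_zero.mpr hdet)
  have hle := rank_submatrix_le M r c
  rw [rank_of_isUnit _ hunit, Fintype.card_fin] at hle
  omega

end Rank

theorem finrank_span_pair_of_linearIndependent {K V : Type*} [Field K] [AddCommGroup V]
    [Module K V] {x y : V} (h : LinearIndependent K ![x, y]) :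
    Module.finrank K (Submodule.span K {x, y}) = 2 := by
  have hrange : ({x, y} : Set V) = Set.range ![x, y] := by
    simp [Matrix.range_cons, Matrix.range_empty, Set.pair_comm]
  rw [hrange, finrank_span_eq_card h, Fintype.card_fin]

section Algebra

variable {K : Type*} [Field K]

theorem exists_conic_param_of_mul_eq_mul_self {a d f : K} (h : d * f = a * a) :
    ∃ l t₀ t₁ : K, a = l * (t₀ * t₁) ∧ d = l * (t₀ * t₀) ∧ f = l * (t₁ * t₁) := by
  by_cases hd : d = 0
  · have ha : a = 0 := mul_self_eq_zero.mp (by rw [← h, hd, zero_mul])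
    exact ⟨f, 0, 1, by simp [ha, hd]⟩
  · refine ⟨d, 1, a / d, by field_simp, by ring, ?_⟩
    field_simp
    linear_combination h

theorem eq_zero_or_eq_neg_two_mul_of_mul_eq_mul [CharZero K] {a b d f : K}
    (ha : a = 0 ∨ a = -2 * d) (hb : b = 0 ∨ b = -2 * f) (h : b * d = a * f) :
    (a = 0 ∧ b = 0) ∨ (a = -2 * d ∧ b = -2 * f) := by
  rcases ha with rfl | rfl <;> rcases hb with rfl | rfl
  · exact Or.inl ⟨rfl, rfl⟩
  · have : f = 0 ∨ d = 0 := by simpa using h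
    rcases this with rfl | rfl <;> simp
  · have : d = 0 ∨ f = 0 := by simpa using h.symm
    rcases this with rfl | rfl <;> simp
  · exact Or.inr ⟨rfl, rfl⟩

end Algebra

theorem smul_wedge (l : ℂ) (x y : Fin 6 → ℂ) : l • wedge x y = wedge (l • x) y := by
  ext i j
  simp [wedge, vecMulVec_apply]
  ring

theorem smul_wedge_add_smul_wedge (s t : ℂ) (x y z : Fin 6 → ℂ) :
    s • wedge x y + t • wedge x z = wedge x (s • y + t • z) := by
  ext i j
  simp [wedge, vecMulVec_apply]
  ring

theorem rank_wedge_le (x y : Fin 6 → ℂ) : (wedge x y).rank ≤ 2 :=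
  rank_vecMulVec_sub_vecMulVec_le x y

theorem rank_le_two_of_mem_span_wedge_pair {x y z : Fin 6 → ℂ} {M : Form}
    (hM : M ∈ Submodule.span ℂ {wedge x y, wedge x z}) : M.rank ≤ 2 := by
  obtain ⟨s, t, rfl⟩ := Submodule.mem_span_pair.mp hM
  rw [smul_wedge_add_smul_wedge]
  exact rank_wedge_le _ _

section A1

def A1Matrix (a b c d f : ℂ) : Form :=
  !![0, d, 0, a, 0, b;
     -d, 0, 0, 0, a, c;
     0, 0, 0, -c, b, 0;
     -a, 0, c, 0, f, 0;
     0, -a, -b, -f, 0, 0;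
     -b, -c, 0, 0, 0, 0]

theorem A1_combination_eq (a b c d f : ℂ) :
    a • (wedge (e 0) (e 3) + wedge (e 1) (e 4)) +
      (b • (wedge (e 0) (e 5) + wedge (e 2) (e 4)) +
        (c • (wedge (e 1) (e 5) - wedge (e 2) (e 3)) +
          (d • wedge (e 0) (e 1) + f • wedge (e 3) (e 4)))) =
    A1Matrix a b c d f := by
  ext i j
  fin_cases i <;> fin_cases j <;> simp [A1Matrix, wedge, vecMulVec_apply, e]

theorem mem_A1_iff {M : Form} : M ∈ A1 ↔ ∃ a b c d f : ℂ, A1Matrix a b c d f = M := by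
  simp only [A1, Submodule.mem_span_insert, Submodule.mem_span_singleton]
  constructor
  · rintro ⟨a, _, ⟨b, _, ⟨c, _, ⟨d, _, ⟨f, rfl⟩, rfl⟩, rfl⟩, rfl⟩, rfl⟩
    exact ⟨a, b, c, d, f, (A1_combination_eq a b c d f).symm⟩
  · rintro ⟨a, b, c, d, f, rfl⟩
    exact ⟨a, _, ⟨b, _, ⟨c, _, ⟨d, _, ⟨f, rfl⟩, rfl⟩, rfl⟩, rfl⟩, (A1_combination_eq a b c d f).symm⟩

theorem A1Matrix_coeffs_of_rank_le_two {a b c d f : ℂ} (h : (A1Matrix a b c d f).rank ≤ 2) :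
    b = 0 ∧ c = 0 ∧ d * f = a * a := by
  have minor (rows cols : Fin 3 → Fin 6) :=
    det_submatrix_eq_zero_of_rank_lt (M := A1Matrix a b c d f) rows cols (by omega)
  have hb := minor ![0, 2, 4] ![2, 4, 5]
  have hc := minor ![1, 2, 3] ![2, 3, 5]
  have hd := minor ![0, 1, 3] ![0, 1, 4]
  have hf := minor ![0, 3, 4] ![1, 3, 4]
  have ha := minor ![0, 1, 3] ![0, 3, 4]
  simp only [det_fin_three, A1Matrix, submatrix_apply, of_apply, cons_val] at hb hc hd hf ha
  refine ⟨pow_eq_zero_iff three_ne_zero |>.mp (by linear_combination hb),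
    pow_eq_zero_iff three_ne_zero |>.mp (by linear_combination hc), ?_⟩
  -- `d`, `f` and `a` all annihilate `d f - a²`, so it vanishes
  by_contra hE
  have hE' : d * f - a * a ≠ 0 := sub_ne_zero.mpr hE
  have hd0 : d = 0 := (mul_eq_zero.mp (by linear_combination hd)).resolve_right hE'
  have hf0 : f = 0 := (mul_eq_zero.mp (by linear_combination hf)).resolve_right hE'
  have ha0 : a = 0 := (mul_eq_zero.mp (by linear_combination ha)).resolve_right hE'
  exact hE' (by rw [hd0, hf0, ha0]; ring)

theorem smul_wedge_conic_eq (l t₀ t₁ : ℂ) :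
    l • wedge (t₀ • e 0 - t₁ • e 4) (t₀ • e 1 + t₁ • e 3) =
      A1Matrix (l * (t₀ * t₁)) 0 0 (l * (t₀ * t₀)) (l * (t₁ * t₁)) := by
  ext i j
  fin_cases i <;> fin_cases j <;>
    simp [A1Matrix, wedge, vecMulVec_apply, e, -mul_eq_mul_left_iff] <;> ring

theorem rank_le_two_locus_A1 :
    {M : Form | M ∈ A1 ∧ M.rank ≤ 2} =
      {M : Form | ∃ l t₀ t₁ : ℂ, M = l • wedge (t₀ • e 0 - t₁ • e 4) (t₀ • e 1 + t₁ • e 3)} := by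
  ext M
  constructor
  · rintro ⟨hM, hrank⟩
    obtain ⟨a, b, c, d, f, rfl⟩ := mem_A1_iff.mp hM
    obtain ⟨rfl, rfl, hconic⟩ := A1Matrix_coeffs_of_rank_le_two hrank
    obtain ⟨l, t₀, t₁, rfl, rfl, rfl⟩ := exists_conic_param_of_mul_eq_mul_self hconic
    exact ⟨l, t₀, t₁, (smul_wedge_conic_eq l t₀ t₁).symm⟩
  · rintro ⟨l, t₀, t₁, rfl⟩
    refine ⟨mem_A1_iff.mpr ⟨_, _, _, _, _, (smul_wedge_conic_eq l t₀ t₁).symm⟩, ?_⟩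
    rw [smul_wedge]
    exact rank_wedge_le _ _

end A1

section A2

def A2Matrix (a b c d f : ℂ) : Form :=
  !![0, d, f, d + a, 0, f + b;
     -d, 0, 0, 0, d + a, c;
     -f, 0, 0, -c, f + b, 0;
     -(d + a), 0, c, 0, d, 0;
     0, -(d + a), -(f + b), -d, 0, -f;
     -(f + b), -c, 0, 0, f, 0]

theorem A2_combination_eq (a b c d f : ℂ) :
    a • (wedge (e 0) (e 3) + wedge (e 1) (e 4)) +
      (b • (wedge (e 0) (e 5) + wedge (e 2) (e 4)) +
        (c • (wedge (e 1) (e 5) - wedge (e 2) (e 3)) +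
          (d • wedge (e 0 - e 4) (e 1 + e 3) + f • wedge (e 0 - e 4) (e 2 + e 5)))) =
    A2Matrix a b c d f := by
  ext i j
  fin_cases i <;> fin_cases j <;> simp [A2Matrix, wedge, vecMulVec_apply, e] <;> ring

theorem mem_A2_iff {M : Form} : M ∈ A2 ↔ ∃ a b c d f : ℂ, A2Matrix a b c d f = M := by
  simp only [A2, Submodule.mem_span_insert, Submodule.mem_span_singleton]
  constructor
  · rintro ⟨a, _, ⟨b, _, ⟨c, _, ⟨d, _, ⟨f, rfl⟩, rfl⟩, rfl⟩, rfl⟩, rfl⟩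
    exact ⟨a, b, c, d, f, (A2_combination_eq a b c d f).symm⟩
  · rintro ⟨a, b, c, d, f, rfl⟩
    exact ⟨a, _, ⟨b, _, ⟨c, _, ⟨d, _, ⟨f, rfl⟩, rfl⟩, rfl⟩, rfl⟩, (A2_combination_eq a b c d f).symm⟩

theorem A2Matrix_coeffs_of_rank_le_two {a b c d f : ℂ} (h : (A2Matrix a b c d f).rank ≤ 2) :
    c = 0 ∧ ((a = 0 ∧ b = 0) ∨ (a = -2 * d ∧ b = -2 * f)) := by
  have minor (rows cols : Fin 3 → Fin 6) :=
    det_submatrix_eq_zero_of_rank_lt (M := A2Matrix a b c d f) rows cols (by omega)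
  have hc := minor ![1, 2, 3] ![2, 3, 5]
  have ha₁ := minor ![0, 1, 3] ![0, 1, 4]
  have ha₂ := minor ![0, 1, 3] ![0, 3, 4]
  have hb₁ := minor ![0, 2, 4] ![0, 2, 5]
  have hb₂ := minor ![0, 2, 4] ![2, 4, 5]
  have hE₁ := minor ![0, 1, 2] ![0, 1, 4]
  have hE₂ := minor ![0, 1, 2] ![0, 2, 4]
  have hE₃ := minor ![0, 1, 2] ![0, 3, 4]
  have hE₄ := minor ![0, 1, 2] ![0, 4, 5]
  simp only [det_fin_three, A2Matrix, submatrix_apply, of_apply, cons_val]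
    at hc ha₁ ha₂ hb₁ hb₂ hE₁ hE₂ hE₃ hE₄
  have ha : a = 0 ∨ a = -2 * d := by
    rcases mul_eq_zero.mp (by linear_combination ha₁ - ha₂ : a * a * (a + 2 * d) = 0) with h | h
    · exact Or.inl (mul_self_eq_zero.mp h)
    · exact Or.inr (by linear_combination h)
  have hb : b = 0 ∨ b = -2 * f := by
    rcases mul_eq_zero.mp (by linear_combination hb₂ - hb₁ : b * b * (b + 2 * f) = 0) with h | h
    · exact Or.inl (mul_self_eq_zero.mp h)
    · exact Or.inr (by linear_combination h)
  -- `d`, `f`, `a` and `b` all annihilate `b d - a f`, so it vanishes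
  have hE : b * d = a * f := by
    by_contra hE
    have hE' : b * d - a * f ≠ 0 := sub_ne_zero.mpr hE
    have hd : d = 0 := (mul_eq_zero.mp (by linear_combination hE₁)).resolve_right hE'
    have hf : f = 0 := (mul_eq_zero.mp (by linear_combination hE₂)).resolve_right hE'
    have ha : a = 0 := (mul_eq_zero.mp (by linear_combination hE₃ - hE₁)).resolve_right hE'
    have hb : b = 0 := (mul_eq_zero.mp (by linear_combination -hE₄ - hE₂)).resolve_right hE'
    exact hE' (by rw [hd, hf, ha, hb]; ring)
  exact ⟨pow_eq_zero_iff three_ne_zero |>.mp (by linear_combination hc),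
    eq_zero_or_eq_neg_two_mul_of_mul_eq_mul ha hb hE⟩

def planeMinus : Submodule ℂ Form :=
  Submodule.span ℂ {wedge (e 0 - e 4) (e 1 + e 3), wedge (e 0 - e 4) (e 2 + e 5)}

def planePlus : Submodule ℂ Form :=
  Submodule.span ℂ {wedge (e 0 + e 4) (e 1 - e 3), wedge (e 0 + e 4) (e 2 - e 5)}

theorem planeMinus_combination_eq (s t : ℂ) :
    s • wedge (e 0 - e 4) (e 1 + e 3) + t • wedge (e 0 - e 4) (e 2 + e 5) =
      A2Matrix 0 0 0 s t := by
  simpa using A2_combination_eq 0 0 0 s t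

theorem planePlus_combination_eq (s t : ℂ) :
    s • wedge (e 0 + e 4) (e 1 - e 3) + t • wedge (e 0 + e 4) (e 2 - e 5) =
      A2Matrix (-2 * s) (-2 * t) 0 s t := by
  ext i j
  fin_cases i <;> fin_cases j <;> simp [A2Matrix, wedge, vecMulVec_apply, e] <;> ring

theorem mem_planeMinus_iff {M : Form} : M ∈ planeMinus ↔ ∃ s t : ℂ, A2Matrix 0 0 0 s t = M := by
  simp only [planeMinus, Submodule.mem_span_pair, planeMinus_combination_eq]

theorem mem_planePlus_iff {M : Form} :
    M ∈ planePlus ↔ ∃ s t : ℂ, A2Matrix (-2 * s) (-2 * t) 0 s t = M := by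
  simp only [planePlus, Submodule.mem_span_pair, planePlus_combination_eq]

theorem planeMinus_le_A2 : planeMinus ≤ A2 := by
  intro M hM
  obtain ⟨s, t, rfl⟩ := mem_planeMinus_iff.mp hM
  exact mem_A2_iff.mpr ⟨_, _, _, _, _, rfl⟩

theorem planePlus_le_A2 : planePlus ≤ A2 := by
  intro M hM
  obtain ⟨s, t, rfl⟩ := mem_planePlus_iff.mp hM
  exact mem_A2_iff.mpr ⟨_, _, _, _, _, rfl⟩

theorem finrank_planeMinus : Module.finrank ℂ planeMinus = 2 := by
  refine finrank_span_pair_of_linearIndependent (LinearIndependent.pair_iff.mpr fun s t hst => ?_)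
  rw [planeMinus_combination_eq] at hst
  exact ⟨by simpa [A2Matrix] using congrFun (congrFun hst 0) 1,
    by simpa [A2Matrix] using congrFun (congrFun hst 0) 2⟩

theorem finrank_planePlus : Module.finrank ℂ planePlus = 2 := by
  refine finrank_span_pair_of_linearIndependent (LinearIndependent.pair_iff.mpr fun s t hst => ?_)
  rw [planePlus_combination_eq] at hst
  exact ⟨by simpa [A2Matrix] using congrFun (congrFun hst 0) 1,
    by simpa [A2Matrix] using congrFun (congrFun hst 0) 2⟩

theorem planeMinus_inf_planePlus : planeMinus ⊓ planePlus = ⊥ := by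
  refine (Submodule.eq_bot_iff _).mpr fun M hM => ?_
  obtain ⟨s, t, rfl⟩ := mem_planeMinus_iff.mp (Submodule.mem_inf.mp hM).1
  obtain ⟨s', t', h⟩ := mem_planePlus_iff.mp (Submodule.mem_inf.mp hM).2
  have hs : s' = s := by simpa [A2Matrix] using congrFun (congrFun h 0) 1
  have ht : t' = t := by simpa [A2Matrix] using congrFun (congrFun h 0) 2
  have hs' : s' + -2 * s' = s := by simpa [A2Matrix] using congrFun (congrFun h 0) 3
  have ht' : t' + -2 * t' = t := by simpa [A2Matrix] using congrFun (congrFun h 0) 5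
  obtain rfl : s = 0 := by linear_combination -(hs' + hs) / 2
  obtain rfl : t = 0 := by linear_combination -(ht' + ht) / 2
  simpa using (A2_combination_eq 0 0 0 0 0).symm

theorem rank_le_two_locus_A2 :
    {M : Form | M ∈ A2 ∧ M.rank ≤ 2} = (planeMinus : Set Form) ∪ (planePlus : Set Form) := by
  ext M
  simp only [Set.mem_union, SetLike.mem_coe]
  constructor
  · rintro ⟨hM, hrank⟩
    obtain ⟨a, b, c, d, f, rfl⟩ := mem_A2_iff.mp hM
    obtain ⟨rfl, ⟨rfl, rfl⟩ | ⟨rfl, rfl⟩⟩ := A2Matrix_coeffs_of_rank_le_two hrank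
    · exact Or.inl (mem_planeMinus_iff.mpr ⟨d, f, rfl⟩)
    · exact Or.inr (mem_planePlus_iff.mpr ⟨d, f, rfl⟩)
  · rintro (hM | hM)
    · exact ⟨planeMinus_le_A2 hM, rank_le_two_of_mem_span_wedge_pair hM⟩
    · exact ⟨planePlus_le_A2 hM, rank_le_two_of_mem_span_wedge_pair hM⟩

end A2

/-- description of the rank ≤ 2 loci of the two stable 4-dimensional
models. -/
theorem statement18 :
    ({M : Form | M ∈ A1 ∧ Matrix.rank M ≤ 2} =
      {M : Form | ∃ l t0 t1 : ℂ,
        M = l • wedge (t0 • e 0 - t1 • e 4) (t0 • e 1 + t1 • e 3)}) ∧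
    (∃ L1 L2 : Submodule ℂ Form, L1 ≤ A2 ∧ L2 ≤ A2 ∧
      Module.finrank ℂ L1 = 2 ∧ Module.finrank ℂ L2 = 2 ∧ L1 ⊓ L2 = ⊥ ∧
      {M : Form | M ∈ A2 ∧ Matrix.rank M ≤ 2} = (L1 : Set Form) ∪ (L2 : Set Form)) :=
  ⟨rank_le_two_locus_A1, planeMinus, planePlus, planeMinus_le_A2, planePlus_le_A2,
    finrank_planeMinus, finrank_planePlus, planeMinus_inf_planePlus, rank_le_two_locus_A2⟩
end
end
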